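/- arXiv:1009.0314 — 11 statements merged into one kernel-verified Lean document; each statement's English description precedes it below -/
import Mathlib

section
/- Let k be a field, n ≥ 2, 1 ≤ e ≤ n-1, d = n-e+1, and let I ⊆ k[x_1,...,x_n] be the ideal generated by all squarefree monomials of degree d. Fix t ≥ 1. A monomial x_1^{b_1}···x_n^{b_n} lies in I^{nt} if (1) 0 ≤ b_i ≤ nt for all i, and (2) b_1 + b_2 + ··· + b_n = ndt. -/
open MvPolynomial Finset

lemma key_step (k : Type*) [Field k] (n d : ℕ) (hdn : d ≤ n)
    (I : Ideal (MvPolynomial (Fin n) k))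
    (hI : I = Ideal.span {m | ∃ s : Finset (Fin n), s.card = d ∧ m = ∏ j ∈ s, X j}) :
    ∀ (N : ℕ) (b : Fin n → ℕ), (∀ i, b i ≤ N) → (∑ i, b i = d * N) →
      (∏ i : Fin n, X i ^ b i) ∈ I ^ N := by
  intro N
  induction N with
  | zero =>
    intro b hb1 hb2
    have hz : ∀ i, b i = 0 := fun i => Nat.le_zero.mp (hb1 i)
    simp [hz]
  | succ N ih =>
    intro b hb1 hb2
    set A : Finset (Fin n) := univ.filter (fun i => b i = N + 1) with hA
    set P : Finset (Fin n) := univ.filter (fun i => 1 ≤ b i) with hP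
    have hAP : A ⊆ P := by
      intro i hi
      simp only [hA, hP, mem_filter, mem_univ, true_and] at *
      omega
    have hAcard : A.card ≤ d := by
      by_contra h
      push_neg at h
      have hlt : d * (N + 1) < ∑ i, b i := by
        calc d * (N + 1) < A.card * (N + 1) :=
              (Nat.mul_lt_mul_right (Nat.succ_pos N)).mpr h
          _ = ∑ _i ∈ A, (N + 1) := by simp [mul_comm]
          _ = ∑ i ∈ A, b i := by
              apply Finset.sum_congr rfl
              intro i hi
              simp only [hA, mem_filter, mem_univ, true_and] at hi
              omega
          _ ≤ ∑ i, b i := Finset.sum_le_sum_of_subset (Finset.subset_univ A)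
      omega
    have hPcard : d ≤ P.card := by
      by_contra h
      push_neg at h
      have hle : ∑ i, b i ≤ P.card * (N + 1) := by
        calc ∑ i, b i = ∑ i ∈ P, b i := by
              symm
              apply Finset.sum_subset (Finset.subset_univ P)
              intro i _ hi
              simp only [hP, mem_filter, mem_univ, true_and] at hi
              omega
          _ ≤ ∑ _i ∈ P, (N + 1) := Finset.sum_le_sum (fun i _ => hb1 i)
          _ = P.card * (N + 1) := by simp [mul_comm]
      have : P.card * (N + 1) < d * (N + 1) := (Nat.mul_lt_mul_right (Nat.succ_pos N)).mpr h
      omega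
    obtain ⟨S, hAS, hSP, hScard⟩ := Finset.exists_subsuperset_card_eq hAP hAcard hPcard
    set b' : Fin n → ℕ := fun i => b i - (if i ∈ S then 1 else 0) with hb'def
    have hbS : ∀ i ∈ S, 1 ≤ b i := fun i hi => by
      have := hSP hi
      simpa [hP] using this
    have hsplit : ∀ i, b i = (if i ∈ S then 1 else 0) + b' i := by
      intro i
      by_cases h : i ∈ S
      · have := hbS i h
        simp only [hb'def, h, if_true]
        omega
      · simp [hb'def, h]
    have hb'1 : ∀ i, b' i ≤ N := by
      intro i
      by_cases h : i ∈ S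
      · have := hb1 i
        simp only [hb'def, h, if_true]
        omega
      · have hiA : i ∉ A := fun hiA => h (hAS hiA)
        simp only [hA, mem_filter, mem_univ, true_and] at hiA
        have := hb1 i
        simp only [hb'def, h, if_false]
        omega
    have hb'2 : ∑ i, b' i = d * N := by
      have hsum : ∑ i, b i = (∑ i : Fin n, (if i ∈ S then 1 else 0)) + ∑ i, b' i := by
        rw [← Finset.sum_add_distrib]
        exact Finset.sum_congr rfl (fun i _ => hsplit i)
      have hcard : (∑ i : Fin n, (if i ∈ S then 1 else 0)) = d := by
        rw [Finset.sum_ite_mem]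
        simp [Finset.univ_inter, hScard]
      rw [hb2, hcard, Nat.mul_succ] at hsum
      omega
    have hmem := ih b' hb'1 hb'2
    have hgen : (∏ j ∈ S, X j : MvPolynomial (Fin n) k) ∈ I := by
      rw [hI]
      exact Ideal.subset_span ⟨S, hScard, rfl⟩
    have hfact : (∏ i : Fin n, X i ^ b i : MvPolynomial (Fin n) k)
        = (∏ j ∈ S, X j) * ∏ i : Fin n, X i ^ b' i := by
      have h1 : (∏ i : Fin n, X i ^ b i : MvPolynomial (Fin n) k)
          = ∏ i : Fin n, (X i ^ (if i ∈ S then 1 else 0) * X i ^ b' i) := by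
        apply Finset.prod_congr rfl
        intro i _
        rw [← pow_add, ← hsplit i]
      rw [h1, Finset.prod_mul_distrib]
      congr 1
      have h2 : ∀ i : Fin n, (X i ^ (if i ∈ S then 1 else 0) : MvPolynomial (Fin n) k)
          = (if i ∈ S then X i else 1) := by
        intro i
        by_cases h : i ∈ S <;> simp [h]
      rw [Finset.prod_congr rfl (fun i _ => h2 i), Finset.prod_ite_mem, Finset.univ_inter]
    rw [hfact, pow_succ']
    exact Ideal.mul_mem_mul hgen hmem

/-- a monomial `x^b` with all `b i ≤ nt` and `∑ b i = ndt` lies in `I^{nt}`,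
where `I` is generated by the squarefree monomials of degree `d = n-e+1`. -/
theorem stmt_2 (k : Type*) [Field k] (n e : ℕ) (hn : 2 ≤ n) (he1 : 1 ≤ e) (he2 : e ≤ n - 1)
    (d : ℕ) (hd : d = n - e + 1)
    (I : Ideal (MvPolynomial (Fin n) k))
    (hI : I = Ideal.span {m | ∃ s : Finset (Fin n), s.card = d ∧ m = ∏ j ∈ s, X j})
    (t : ℕ) (ht : 1 ≤ t) (b : Fin n → ℕ)
    (hb1 : ∀ i, b i ≤ n * t) (hb2 : ∑ i, b i = n * d * t) :
    (∏ i : Fin n, X i ^ b i) ∈ I ^ (n * t) := by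
  have hdn : d ≤ n := by omega
  exact key_step k n d hdn I hI (n * t) b hb1 (by rw [hb2]; ring)
end

section
/- Let k be a field, n ≥ 2, 1 ≤ e ≤ n-1, d = n-e+1, and let I ⊆ k[x_1,...,x_n] be the ideal generated by all squarefree monomials of degree d. Fix t ≥ 1. If a monomial x_1^{b_1}···x_n^{b_n} is a minimal generator of I^{nt} (i.e., it lies in I^{nt} and no proper divisor of it lies in I^{nt}), then 0 ≤ b_i ≤ nt for all i and b_1 + ··· + b_n = ndt. -/
open MvPolynomial


lemma aux_prod_monomial {k : Type*} [CommSemiring k] {n : ℕ} {α : Type*} (s : Finset α)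
    (f : α → (Fin n →₀ ℕ)) :
    ∏ a ∈ s, (monomial (f a) (1:k)) = monomial (∑ a ∈ s, f a) 1 := by
  induction s using Finset.cons_induction with
  | empty => simp
  | cons a s ha ih => rw [Finset.prod_cons, Finset.sum_cons, ih, monomial_mul, one_mul]

lemma aux_top_set {n : ℕ} (f : Fin n → ℕ) :
    ∀ m : ℕ, m ≤ n → ∃ S : Finset (Fin n), S.card = m ∧ ∀ i ∈ S, ∀ j ∉ S, f j ≤ f i := by
  intro m
  induction m with
  | zero => exact fun _ => ⟨∅, by simp, by simp⟩
  | succ m ih =>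
    intro hm
    obtain ⟨S, hcard, htop⟩ := ih (by omega)
    have hne : (Finset.univ \ S).Nonempty := by
      rw [← Finset.card_pos, Finset.card_sdiff_of_subset (Finset.subset_univ S)]
      simp only [Finset.card_univ, Fintype.card_fin, hcard]; omega
    obtain ⟨a, haS, hamax⟩ := Finset.exists_max_image _ f hne
    refine ⟨insert a S, ?_, ?_⟩
    · rw [Finset.card_insert_of_notMem (by simpa using (Finset.mem_sdiff.mp haS).2), hcard]
    · intro i hi j hj
      rcases Finset.mem_insert.mp hi with rfl | hiS
      · exact hamax j (Finset.mem_sdiff.mpr ⟨Finset.mem_univ _,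
          fun h => hj (Finset.mem_insert_of_mem h)⟩)
      · exact htop i hiS j (fun h => hj (Finset.mem_insert_of_mem h))

lemma aux_comb {n d : ℕ} (hd1 : 1 ≤ d) (hdn : d ≤ n) :
    ∀ (N : ℕ) (b : Fin n → ℕ), N * d ≤ ∑ i, min (b i) N →
      ∃ g : Fin N → Finset (Fin n), (∀ i, (g i).card = d) ∧
        ∀ j, (∑ i, if j ∈ g i then 1 else 0) ≤ b j := by
  intro N
  induction N with
  | zero => exact fun b _ => ⟨Fin.elim0, fun i => i.elim0, fun j => by simp⟩
  | succ N ih =>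
    intro b hb
    obtain ⟨S, hScard, hStop⟩ := aux_top_set b d hdn
    -- every element of S has b ≥ 1
    have hS1 : ∀ i ∈ S, 1 ≤ b i := by
      intro i hiS
      by_contra h0
      have hbi : b i = 0 := by omega
      have hout : ∀ j, j ∉ S → b j = 0 := fun j hj =>
        Nat.le_zero.mp (hbi ▸ hStop i hiS j hj)
      have heq : ∑ j, min (b j) (N+1) = ∑ j ∈ S, min (b j) (N+1) :=
        (Finset.sum_subset (Finset.subset_univ S)
          (fun x _ hx => by simp [hout x hx])).symm
      have hle : ∑ j ∈ S, min (b j) (N+1) ≤ (d-1) * (N+1) := by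
        calc ∑ j ∈ S, min (b j) (N+1) = ∑ j ∈ S.erase i, min (b j) (N+1) :=
              (Finset.sum_erase _ (by simp [hbi])).symm
          _ ≤ ∑ _j ∈ S.erase i, (N+1) := Finset.sum_le_sum fun j _ => min_le_right _ _
          _ = (d-1)*(N+1) := by
              rw [Finset.sum_const, smul_eq_mul, Finset.card_erase_of_mem hiS, hScard]
      have hc : (N+1)*d = d*(N+1) := Nat.mul_comm _ _
      have h4 : d*(N+1) ≤ (d-1)*(N+1) := by omega
      have h5 : d ≤ d - 1 := Nat.le_of_mul_le_mul_right h4 (by omega)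
      omega
    set b' : Fin n → ℕ := fun j => b j - (if j ∈ S then 1 else 0) with hb'
    have key : N * d ≤ ∑ j, min (b' j) N := by
      by_cases hcase : ∃ i₀, i₀ ∉ S ∧ N + 1 ≤ b i₀
      · obtain ⟨i₀, hi₀S, hi₀⟩ := hcase
        have hbig : ∀ i ∈ S, N + 1 ≤ b i := fun i hiS =>
          le_trans hi₀ (hStop i hiS i₀ hi₀S)
        have : ∑ j ∈ S, min (b' j) N ≤ ∑ j, min (b' j) N :=
          Finset.sum_le_sum_of_subset (Finset.subset_univ S)
        have heq : ∑ j ∈ S, min (b' j) N = d * N := by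
          rw [Finset.sum_congr rfl (fun j hj => ?_), Finset.sum_const, smul_eq_mul, hScard]
          have := hbig j hj
          simp only [hb', if_pos hj]
          omega
        have hc : d * N = N * d := Nat.mul_comm _ _
        omega
      · push_neg at hcase
        have hpt : ∀ j, min (b j) (N+1) ≤ min (b' j) N + (if j ∈ S then 1 else 0) := by
          intro j
          by_cases hj : j ∈ S
          · simp only [hb', if_pos hj]; omega
          · have := hcase j hj
            simp only [hb', if_neg hj]; omega
        have hsum := Finset.sum_le_sum (fun j (_ : j ∈ Finset.univ) => hpt j)
        rw [Finset.sum_add_distrib] at hsum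
        have hcard : ∑ j, (if j ∈ S then 1 else 0) = d := by
          simp [hScard]
        have : (N+1) * d = N * d + d := by ring
        omega
    obtain ⟨g', hg'card, hg'⟩ := ih b' key
    refine ⟨Fin.snoc g' S, fun i => ?_, fun j => ?_⟩
    · refine Fin.lastCases ?_ ?_ i
      · simpa using hScard
      · intro i; simpa using hg'card i
    · rw [Fin.sum_univ_castSucc]
      simp only [Fin.snoc_castSucc, Fin.snoc_last]
      have h1 := hg' j
      have h2 : (if j ∈ S then 1 else 0) ≤ b j := by
        by_cases hj : j ∈ S
        · simpa [hj] using hS1 j hj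
        · simp [hj]
      simp only [hb'] at h1
      omega

lemma aux_gen_set {k : Type*} [CommSemiring k] {n d : ℕ} :
    {m : MvPolynomial (Fin n) k | ∃ s : Finset (Fin n), s.card = d ∧ m = ∏ j ∈ s, X j}
      = (fun c => monomial c (1:k)) ''
        {c | ∃ s : Finset (Fin n), s.card = d ∧ c = ∑ j ∈ s, Finsupp.single j 1} := by
  have hX : ∀ (s : Finset (Fin n)),
      (∏ j ∈ s, (X j : MvPolynomial (Fin n) k)) = monomial (∑ j ∈ s, Finsupp.single j 1) 1 := by
    intro s
    rw [← aux_prod_monomial]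
    exact Finset.prod_congr rfl fun j _ => by rw [← X_pow_eq_monomial, pow_one]
  ext m
  constructor
  · rintro ⟨s, hs, rfl⟩
    exact ⟨_, ⟨s, hs, rfl⟩, (hX s).symm⟩
  · rintro ⟨c, ⟨s, hs, rfl⟩, rfl⟩
    exact ⟨s, hs, (hX s).symm⟩

lemma aux_pow_span {k : Type*} [CommSemiring k] {n d : ℕ} (N : ℕ) :
    (Ideal.span {m : MvPolynomial (Fin n) k |
        ∃ s : Finset (Fin n), s.card = d ∧ m = ∏ j ∈ s, X j}) ^ N
    = Ideal.span ((fun c => monomial c (1:k)) ''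
        {c | ∃ g : Fin N → Finset (Fin n), (∀ i, (g i).card = d) ∧
          c = ∑ i, ∑ j ∈ g i, Finsupp.single j 1}) := by
  induction N with
  | zero =>
    rw [pow_zero]
    symm
    rw [Ideal.one_eq_top, Ideal.eq_top_iff_one]
    apply Ideal.subset_span
    refine ⟨0, ⟨Fin.elim0, fun i => i.elim0, by simp⟩, by simp⟩
  | succ N ih =>
    rw [pow_succ, ih, aux_gen_set, Ideal.span_mul_span']
    congr 1
    ext m
    rw [Set.mem_mul]
    constructor
    · rintro ⟨x, ⟨_, ⟨g, hg, rfl⟩, rfl⟩, y, ⟨_, ⟨s, hs, rfl⟩, rfl⟩, rfl⟩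
      refine ⟨(∑ i : Fin N, ∑ j ∈ g i, Finsupp.single j 1) + ∑ j ∈ s, Finsupp.single j 1,
        ⟨Fin.snoc g s, ?_, ?_⟩, ?_⟩
      · intro i
        refine Fin.lastCases ?_ ?_ i
        · simpa using hs
        · intro i; simpa using hg i
      · rw [Fin.sum_univ_castSucc]
        simp
      · simp [monomial_mul]
    · rintro ⟨c, ⟨g, hg, rfl⟩, rfl⟩
      refine ⟨monomial (∑ i : Fin N, ∑ j ∈ g (Fin.castSucc i), Finsupp.single j 1) 1,
        ⟨_, ⟨fun i => g (Fin.castSucc i), fun i => hg _, rfl⟩, rfl⟩,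
        monomial (∑ j ∈ g (Fin.last N), Finsupp.single j 1) 1,
        ⟨_, ⟨g (Fin.last N), hg _, rfl⟩, rfl⟩, ?_⟩
      simp [monomial_mul, Fin.sum_univ_castSucc]

lemma aux_prod_X_pow {k : Type*} [CommSemiring k] {n : ℕ} (c : Fin n →₀ ℕ) :
    (∏ i : Fin n, X i ^ c i : MvPolynomial (Fin n) k) = monomial c 1 := by
  rw [← prod_X_pow_eq_monomial]
  exact (Finset.prod_subset (Finset.subset_univ _) fun x _ hx => by
    simp [Finsupp.notMem_support_iff.mp hx]).symm

lemma aux_sum_single_apply {n : ℕ} {N : ℕ} (g : Fin N → Finset (Fin n)) (j : Fin n) :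
    (∑ i, ∑ j' ∈ g i, Finsupp.single j' 1) j = ∑ i, (if j ∈ g i then 1 else 0) := by
  rw [Finsupp.finset_sum_apply]
  refine Finset.sum_congr rfl fun i _ => ?_
  rw [Finsupp.finset_sum_apply]
  simp [Finsupp.single_apply, Finset.sum_ite_eq']

lemma aux_mem_iff {k : Type*} [Field k] {n d : ℕ} (hd1 : 1 ≤ d) (hdn : d ≤ n) (N : ℕ)
    (b : Fin n → ℕ) :
    (∏ i : Fin n, X i ^ b i) ∈ (Ideal.span {m : MvPolynomial (Fin n) k |
        ∃ s : Finset (Fin n), s.card = d ∧ m = ∏ j ∈ s, X j}) ^ N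
    ↔ N * d ≤ ∑ i, min (b i) N := by
  set B : Fin n →₀ ℕ := Finsupp.equivFunOnFinite.symm b with hB
  have hBb : ∀ j, B j = b j := fun j => rfl
  have hP : (∏ i : Fin n, X i ^ b i : MvPolynomial (Fin n) k) = monomial B 1 := by
    rw [← aux_prod_X_pow]
    exact Finset.prod_congr rfl fun i _ => by rw [hBb]
  classical
  rw [hP, aux_pow_span, mem_ideal_span_monomial_image]
  rw [support_monomial, if_neg one_ne_zero]
  constructor
  · intro h
    obtain ⟨c, ⟨g, hg, rfl⟩, hle⟩ := h B (Finset.mem_singleton_self B)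
    have hcle : ∀ j, (∑ i, if j ∈ g i then 1 else 0) ≤ b j := by
      intro j
      rw [← aux_sum_single_apply, ← hBb j]
      exact hle j
    have hcN : ∀ j : Fin n, (∑ i, if j ∈ g i then 1 else 0) ≤ N := by
      intro j
      calc (∑ i : Fin N, if j ∈ g i then 1 else 0) ≤ ∑ _i : Fin N, 1 :=
            Finset.sum_le_sum fun i _ => by split <;> omega
        _ = N := by simp
    have hsum : ∑ j, (∑ i, if j ∈ g i then 1 else 0) = N * d := by
      rw [Finset.sum_comm]
      calc ∑ i : Fin N, ∑ j : Fin n, (if j ∈ g i then 1 else 0)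
          = ∑ _i : Fin N, d := Finset.sum_congr rfl fun i _ => by simp [hg i]
        _ = N * d := by simp [Nat.mul_comm]
    calc N * d = ∑ j, (∑ i, if j ∈ g i then 1 else 0) := hsum.symm
      _ ≤ ∑ j, min (b j) N :=
          Finset.sum_le_sum fun j _ => le_min (hcle j) (hcN j)
  · intro h
    obtain ⟨g, hg, hle⟩ := aux_comb hd1 hdn N b h
    intro m hm
    rw [Finset.mem_singleton] at hm
    subst hm
    refine ⟨_, ⟨g, hg, rfl⟩, ?_⟩
    intro j
    rw [aux_sum_single_apply, hBb j]
    exact hle j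


/-- if the monomial `x^b` is a minimal generator of `I^{nt}` (it lies in
`I^{nt}` but no proper divisor `x^b / x_i` does), then `b i ≤ nt` for all `i` and
`∑ b i = ndt`. -/
theorem stmt_3 (k : Type*) [Field k] (n e : ℕ) (hn : 2 ≤ n) (he1 : 1 ≤ e) (he2 : e ≤ n - 1)
    (d : ℕ) (hd : d = n - e + 1)
    (I : Ideal (MvPolynomial (Fin n) k))
    (hI : I = Ideal.span {m | ∃ s : Finset (Fin n), s.card = d ∧ m = ∏ j ∈ s, X j})
    (t : ℕ) (ht : 1 ≤ t) (b : Fin n → ℕ)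
    (hmem : (∏ i : Fin n, X i ^ b i) ∈ I ^ (n * t))
    (hmin : ∀ i : Fin n, 1 ≤ b i →
      (∏ j : Fin n, X j ^ (Function.update b i (b i - 1) j)) ∉ I ^ (n * t)) :
    (∀ i, b i ≤ n * t) ∧ ∑ i, b i = n * d * t := by
  subst hI
  have hd1 : 1 ≤ d := by omega
  have hdn : d ≤ n := by omega
  set N := n * t with hN
  have hNpos : 1 ≤ N := Nat.mul_pos (by omega) ht
  rw [aux_mem_iff hd1 hdn] at hmem
  have hble : ∀ i, b i ≤ N := by
    intro i
    by_contra hbi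
    push_neg at hbi
    refine hmin i (by omega) ?_
    rw [aux_mem_iff hd1 hdn]
    have heq : ∑ j, min (Function.update b i (b i - 1) j) N = ∑ j, min (b j) N := by
      refine Finset.sum_congr rfl fun j _ => ?_
      by_cases hj : j = i
      · subst hj; rw [Function.update_self]; omega
      · rw [Function.update_of_ne hj]
    omega
  have hmins : ∑ i, min (b i) N = ∑ i, b i :=
    Finset.sum_congr rfl fun i _ => min_eq_left (hble i)
  have hge : N * d ≤ ∑ i, b i := by omega
  have hnotgt : ¬ (N * d + 1 ≤ ∑ i, b i) := by
    intro hgt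
    have hpos : ∃ i, 1 ≤ b i := by
      by_contra hno
      push_neg at hno
      have hz : ∑ i, b i = 0 := Finset.sum_eq_zero fun i _ => by have := hno i; omega
      have hNd : 1 ≤ N * d := Nat.mul_pos (by omega) (by omega)
      omega
    obtain ⟨i, hi⟩ := hpos
    refine hmin i hi ?_
    rw [aux_mem_iff hd1 hdn]
    have h1 := Finset.sum_update_of_mem (Finset.mem_univ i) b (b i - 1)
    have h2 : ∑ j, b j = b i + ∑ j ∈ Finset.univ \ {i}, b j := by
      rw [Finset.sum_eq_sum_sdiff_singleton_add (Finset.mem_univ i) b]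
      omega
    have h3 : ∑ j, Function.update b i (b i - 1) j = (∑ j, b j) - 1 := by omega
    have h4 : ∑ j, min (Function.update b i (b i - 1) j) N
        = ∑ j, Function.update b i (b i - 1) j := by
      refine Finset.sum_congr rfl fun j _ => min_eq_left ?_
      by_cases hj : j = i
      · subst hj; rw [Function.update_self]; have := hble j; omega
      · rw [Function.update_of_ne hj]; exact hble j
    omega
  refine ⟨hble, ?_⟩
  have : ∑ i, b i = N * d := by omega
  rw [this, hN]
  exact mul_right_comm n t d
end

section
/- Let n ≥ 2, 1 ≤ e ≤ n-1, d = n-e+1, t ≥ 1. Let U = { u ∈ {0,1}^n : u_1 + ··· + u_n = d }. Suppose b = (b_1,...,b_n) ∈ ℕ^n satisfies 0 ≤ b_i ≤ nt for all i and b_1 + ··· + b_n = ndt. Then there exist u^0, u^1, ..., u^{nt-1} ∈ U such that b = u^0 + u^1 + ··· + u^{nt-1} (as vectors in ℕ^n). -/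
lemma decomp_aux (n d : ℕ) (hd : d ≤ n) :
    ∀ N (b : Fin n → ℕ), (∀ i, b i ≤ N) → ∑ i, b i = N * d →
    ∃ u : Fin N → Fin n → ℕ,
      (∀ j, (∀ i, u j i ≤ 1) ∧ ∑ i, u j i = d) ∧ ∀ i, b i = ∑ j, u j i := by
  intro N
  induction N with
  | zero =>
    intro b hb hs
    exact ⟨fun j => j.elim0, fun j => j.elim0, fun i => by
      simp [Nat.le_zero.mp (hb i)]⟩
  | succ M ih =>
    intro b hb hs
    set T := Finset.univ.filter (fun i => b i = M + 1) with hT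
    set P := Finset.univ.filter (fun i => 1 ≤ b i) with hP
    have hTP : T ⊆ P := by
      intro i hi
      simp only [hT, hP, Finset.mem_filter, Finset.mem_univ, true_and] at hi ⊢
      omega
    have hTcard : T.card ≤ d := by
      have h1 : T.card * (M + 1) = ∑ i ∈ T, b i := by
        rw [Finset.sum_congr rfl (fun i hi => by
          simp only [hT, Finset.mem_filter] at hi; exact hi.2)]
        simp [mul_comm]
      have h2 : ∑ i ∈ T, b i ≤ ∑ i, b i :=
        Finset.sum_le_sum_of_subset (Finset.subset_univ T)
      rw [hs] at h2
      nlinarith [h1, h2]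
    have hPcard : d ≤ P.card := by
      have h1 : ∑ i, b i = ∑ i ∈ P, b i := by
        rw [← Finset.sum_filter_add_sum_filter_not Finset.univ (fun i => 1 ≤ b i) b]
        have : ∑ i ∈ Finset.univ.filter (fun i => ¬ 1 ≤ b i), b i = 0 := by
          apply Finset.sum_eq_zero
          intro i hi
          simp only [Finset.mem_filter] at hi
          omega
        rw [this, add_zero]
      have h2 : ∑ i ∈ P, b i ≤ P.card * (M + 1) :=
        Finset.sum_le_card_nsmul P b (M + 1) (fun i _ => hb i)
      rw [hs] at h1
      nlinarith
    obtain ⟨S, hTS, hSP, hScard⟩ := Finset.exists_subsuperset_card_eq hTP hTcard hPcard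
    set b' : Fin n → ℕ := fun i => b i - (if i ∈ S then 1 else 0) with hb'
    have hle : ∀ i, (if i ∈ S then 1 else 0) ≤ b i := by
      intro i
      by_cases h : i ∈ S
      · simp only [h, if_true]
        have := hSP h
        simp only [hP, Finset.mem_filter] at this
        exact this.2
      · simp [h]
    have hb'le : ∀ i, b' i ≤ M := by
      intro i
      by_cases h : i ∈ S
      · simp only [hb', h, if_true]
        have := hb i; omega
      · have hiT : i ∉ T := fun hc => h (hTS hc)
        simp only [hT, Finset.mem_filter, Finset.mem_univ, true_and] at hiT
        simp only [hb', h, if_neg]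
        have := hb i; omega
    have hindS : ∑ i, (if i ∈ S then 1 else 0) = d := by
      rw [Finset.sum_ite_mem]
      simp [Finset.univ_inter, hScard]
    have hb'sum : ∑ i, b' i = M * d := by
      have h3 : ∑ i, b' i + ∑ i, (if i ∈ S then 1 else 0) = (M + 1) * d := by
        rw [← Finset.sum_add_distrib]
        have h4 : ∑ i, (b' i + if i ∈ S then 1 else 0) = ∑ i, b i :=
          Finset.sum_congr rfl (fun i _ => by have := hle i; simp only [hb']; omega)
        rw [h4, hs]
      rw [hindS] at h3
      have h5 : (M + 1) * d = M * d + d := by ring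
      omega
    obtain ⟨u', hu'1, hu'2⟩ := ih b' hb'le hb'sum
    refine ⟨fun j => Fin.cases (fun i => if i ∈ S then 1 else 0) u' j, ?_, ?_⟩
    · intro j
      induction j using Fin.cases with
      | zero =>
        exact ⟨fun i => by simp only [Fin.cases_zero]; split <;> simp,
          by simpa using hindS⟩
      | succ j' => simpa using hu'1 j'
    · intro i
      rw [Fin.sum_univ_succ]
      simp only [Fin.cases_zero, Fin.cases_succ]
      have := hu'2 i
      have h2 := hle i
      simp only [hb'] at this
      omega

/-- a vector `b ∈ ℕ^n` with all entries `≤ nt` and coordinate sum `ndt`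
is a sum of `nt` zero-one vectors each with coordinate sum `d`. -/
theorem stmt_4 (n e : ℕ) (hn : 2 ≤ n) (he1 : 1 ≤ e) (he2 : e ≤ n - 1)
    (d : ℕ) (hd : d = n - e + 1) (t : ℕ) (ht : 1 ≤ t)
    (b : Fin n → ℕ) (hb1 : ∀ i, b i ≤ n * t) (hb2 : ∑ i, b i = n * d * t) :
    ∃ u : Fin (n * t) → Fin n → ℕ,
      (∀ j, (∀ i, u j i ≤ 1) ∧ ∑ i, u j i = d) ∧ ∀ i, b i = ∑ j, u j i := by
  have hdn : d ≤ n := by omega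
  exact decomp_aux n d hdn (n * t) b hb1 (by rw [hb2]; ring)
end

section
/- Let n ≥ 2, 1 ≤ e ≤ n-1, d = n-e+1, t ≥ 1, and i with 0 ≤ i ≤ nt. Suppose β = (b_1,...,b_n) ∈ ℕ^n satisfies b_1 + ··· + b_n = d(nt - i) and 0 ≤ b_j ≤ nt - i for all j. If β ≠ 0 and i < nt, then β has at least d nonzero coordinates, and subtracting 1 from each of the d largest coordinates of β yields a vector β' ∈ ℕ^n with coordinate sum d(nt - i - 1) and all coordinates at most nt - i - 1. -/
/-- inductive step of the greedy decomposition.  If `β` has coordinate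
sum `d(nt-i)` and all entries `≤ nt-i`, with `β ≠ 0` and `i < nt`, then `β` has at
least `d` nonzero coordinates, and subtracting `1` from each of the `d` largest
coordinates (any `d`-element set `S` such that every coordinate outside `S` is `≤`
every coordinate in `S`) gives a vector with positive entries on `S`, coordinate sum
`d(nt-i-1)` and all entries `≤ nt-i-1`. -/
theorem stmt_5 (n e : ℕ) (hn : 2 ≤ n) (he1 : 1 ≤ e) (he2 : e ≤ n - 1)
    (d : ℕ) (hd : d = n - e + 1) (t : ℕ) (ht : 1 ≤ t)
    (i : ℕ) (hi0 : 0 ≤ i) (hi : i ≤ n * t)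
    (β : Fin n → ℕ)
    (hsum : ∑ j, β j = d * (n * t - i)) (hub : ∀ j, β j ≤ n * t - i)
    (hne : β ≠ 0) (hilt : i < n * t) :
    d ≤ (Finset.univ.filter fun j => β j ≠ 0).card ∧
      ∀ S : Finset (Fin n), S.card = d →
        (∀ j ∈ S, ∀ j' ∉ S, β j' ≤ β j) →
          (∀ j ∈ S, 1 ≤ β j) ∧
          (∑ j, (β j - if j ∈ S then 1 else 0)) = d * (n * t - i - 1) ∧
          ∀ j, β j - (if j ∈ S then 1 else 0) ≤ n * t - i - 1 := by
  set k := n * t - i with hk'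
  have hk : 0 < k := Nat.sub_pos_of_lt hilt
  have hcard : d ≤ (Finset.univ.filter fun j => β j ≠ 0).card := by
    have h1 : ∑ j, β j ≤ (Finset.univ.filter fun j => β j ≠ 0).card * k := by
      rw [← Finset.sum_filter_ne_zero]
      calc ∑ j ∈ Finset.univ.filter fun j => β j ≠ 0, β j
          ≤ ∑ _j ∈ Finset.univ.filter fun j => β j ≠ 0, k :=
            Finset.sum_le_sum fun x _ => hub x
        _ = (Finset.univ.filter fun j => β j ≠ 0).card * k := by
            rw [Finset.sum_const, smul_eq_mul]
    rw [hsum] at h1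
    exact Nat.le_of_mul_le_mul_right h1 hk
  refine ⟨hcard, fun S hSd hSmax => ?_⟩
  have hpos : ∀ j ∈ S, 1 ≤ β j := by
    intro j hj
    by_contra h
    have hj0 : β j = 0 := by omega
    have hsub : (Finset.univ.filter fun x => β x ≠ 0) ⊆ S.erase j := by
      intro x hx
      simp only [Finset.mem_filter] at hx
      have hxS : x ∈ S := by
        by_contra hxS
        exact hx.2 (Nat.le_zero.mp (hj0 ▸ hSmax j hj x hxS))
      refine Finset.mem_erase.mpr ⟨?_, hxS⟩
      rintro rfl; exact hx.2 hj0
    have := Finset.card_le_card hsub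
    rw [Finset.card_erase_of_mem hj, hSd] at this
    omega
  refine ⟨hpos, ?_, ?_⟩
  · have hdist : ∑ j, (β j - if j ∈ S then 1 else 0)
        = ∑ j, β j - ∑ j, (if j ∈ S then 1 else 0) := by
      apply Finset.sum_tsub_distrib
      intro x _
      split
      · exact hpos x ‹_›
      · exact Nat.zero_le _
    have hsumite : (∑ j, (if j ∈ S then 1 else 0)) = d := by
      rw [Finset.sum_ite_mem, Finset.univ_inter, Finset.sum_const, smul_eq_mul,
        mul_one, hSd]
    rw [hdist, hsum, hsumite]
    have h2 : n * t - i - 1 = k - 1 := by omega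
    rw [h2, ← Nat.pred_eq_sub_one, Nat.mul_pred]
  · intro j
    by_cases hjS : j ∈ S
    · have := hub j
      simp only [hjS, if_true]
      omega
    · simp only [hjS, if_false]
      by_contra h
      have hjk : β j = k := by have := hub j; omega
      have hall : ∀ x ∈ S, β x = k := fun x hx =>
        le_antisymm (hub x) (hjk ▸ hSmax x hx j hjS)
      have hins : ∑ x ∈ insert j S, β x = (d + 1) * k := by
        rw [Finset.sum_insert hjS, Finset.sum_congr rfl hall, Finset.sum_const,
          smul_eq_mul, hSd, hjk]
        ring
      have hle : ∑ x ∈ insert j S, β x ≤ ∑ x, β x :=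
        Finset.sum_le_sum_of_subset (Finset.subset_univ _)
      rw [hins, hsum] at hle
      nlinarith
end

section
/- Let k be a field, n ≥ 2, 1 ≤ e ≤ n-1, d = n-e+1. Let I = ⋂_σ I_σ where σ ranges over e-element subsets of {1,...,n} and I_σ = (x_{i_1},...,x_{i_e}). Then for every t ≥ 1, the symbolic power I^{(edt)} := ⋂_σ I_σ^{edt} is contained in I^{nt}. -/
/-!
A polynomial lies in `I_σ ^ m` only if each of its monomials `x ^ a` has `∑_{i ∈ σ} a_i ≥ m`.
So for `x ^ a` in the symbolic power, every `e` of the exponents sum to at least `e d t`.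
Comparing a set of `e` smallest exponents with the others shows that the exponents truncated
at `n t` still sum to at least `n t d`. A monomial `x ^ c` with all `c_i ≤ m` and `|c| = m d`
is a product of `m` squarefree monomials `x ^ S` with `|S| = d`: peel off one whose `S` contains
every index where `c_i = m`. Each such `x ^ S` lies in `I`, because `d + e > n` forces `S` to meet
every `e`-subset.
-/

open MvPolynomial Finset

namespace Finset

variable {ι : Type*} [Fintype ι]

theorem exists_card_eq_forall_le_of_mem_of_notMem (a : ι → ℕ) {e : ℕ}
    (he : e ≤ Fintype.card ι) :
    ∃ s : Finset ι, #s = e ∧ ∀ i ∉ s, ∀ j ∈ s, a j ≤ a i := by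
  classical
  have hne : (powersetCard e (univ : Finset ι)).Nonempty := powersetCard_nonempty.2 (by simpa)
  obtain ⟨s, hs, hmin⟩ := exists_min_image _ (fun s => ∑ i ∈ s, a i) hne
  have hse : #s = e := (mem_powersetCard.1 hs).2
  refine ⟨s, hse, fun i hi j hj => ?_⟩
  have hij : i ∉ s.erase j := fun h => hi (mem_of_mem_erase h)
  have hswap := hmin (insert i (s.erase j)) <| mem_powersetCard.2
    ⟨subset_univ _, by rw [card_insert_of_notMem hij, card_erase_add_one hj, hse]⟩
  rw [sum_insert hij, ← add_sum_erase s a hj] at hswap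
  omega

theorem le_sum_min_of_forall_card_eq (a : ι → ℕ) {e q M : ℕ} (he : 0 < e)
    (heι : e ≤ Fintype.card ι) (hM : Fintype.card ι * q ≤ (Fintype.card ι - e + 1) * M)
    (h : ∀ s : Finset ι, #s = e → e * q ≤ ∑ i ∈ s, a i) :
    Fintype.card ι * q ≤ ∑ i, min (a i) M := by
  classical
  set n := Fintype.card ι
  have hqM : q ≤ M := Nat.le_of_mul_le_mul_left (hM.trans (by gcongr; omega)) (by omega)
  obtain ⟨s, hse, hs⟩ := exists_card_eq_forall_le_of_mem_of_notMem a heι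
  have hsc : #sᶜ = n - e := by rw [card_compl, hse]
  by_cases hsmall : ∀ j ∈ s, a j ≤ M
  · have hcompl : ∀ i ∈ sᶜ, q ≤ min (a i) M := fun i hi => by
      have : e * q ≤ e * a i := calc
        e * q ≤ ∑ j ∈ s, a j := h s hse
        _ ≤ ∑ _j ∈ s, a i := sum_le_sum fun j hj => hs i (mem_compl.1 hi) j hj
        _ = e * a i := by rw [sum_const, hse, smul_eq_mul]
      exact le_min (Nat.le_of_mul_le_mul_left this he) hqM
    calc n * q = e * q + #sᶜ * q := by rw [hsc, ← add_mul]; congr 1; omega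
      _ ≤ ∑ i ∈ s, min (a i) M + ∑ i ∈ sᶜ, min (a i) M := by
        gcongr
        · rw [sum_congr rfl fun j hj => min_eq_left (hsmall j hj)]
          exact h s hse
        · exact card_nsmul_le_sum _ _ _ hcompl
      _ = ∑ i, min (a i) M := sum_add_sum_compl s _
  · push Not at hsmall
    obtain ⟨j, hj, hjM⟩ := hsmall
    have hjc : j ∉ sᶜ := by simpa using hj
    have hbig : ∀ i ∈ insert j sᶜ, M ≤ min (a i) M := by
      intro i hi
      rcases mem_insert.1 hi with rfl | hi
      · exact le_min hjM.le le_rfl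
      · exact le_min (hjM.le.trans (hs i (mem_compl.1 hi) j hj)) le_rfl
    calc n * q ≤ (n - e + 1) * M := hM
      _ = #(insert j sᶜ) * M := by rw [card_insert_of_notMem hjc, hsc]
      _ ≤ ∑ i ∈ insert j sᶜ, min (a i) M := card_nsmul_le_sum _ _ _ hbig
      _ ≤ ∑ i, min (a i) M := sum_le_sum_of_subset (subset_univ _)

end Finset

namespace MvPolynomial

variable {σ R : Type*} [CommSemiring R]

theorem mem_of_forall_monomial_one_mem {J : Ideal (MvPolynomial σ R)} {f : MvPolynomial σ R}
    (h : ∀ a ∈ f.support, monomial a 1 ∈ J) : f ∈ J := by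
  rw [f.as_sum]
  refine J.sum_mem fun a ha => ?_
  simpa only [C_mul_monomial, mul_one] using J.mul_mem_left (C (f.coeff a)) (h a ha)

theorem le_sum_of_mem_span_X_image_pow {s : Finset σ} {m : ℕ} {f : MvPolynomial σ R}
    (hf : f ∈ Ideal.span (X '' (s : Set σ)) ^ m) {a : σ →₀ ℕ} (ha : a ∈ f.support) :
    m ≤ ∑ i ∈ s, a i := by
  classical
  induction m generalizing f a with
  | zero => exact Nat.zero_le _
  | succ m ih =>
    rw [pow_succ] at hf
    refine Submodule.mul_induction_on hf (fun g hg h hh ha => ?_) (fun g h hg hh ha => ?_) ha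
    · obtain ⟨b, hb, c, hc, rfl⟩ := mem_add.1 (support_mul g h ha)
      obtain ⟨i, hi, hci⟩ := mem_ideal_span_X_image.1 hh c hc
      have hc1 : 1 ≤ ∑ j ∈ s, c j :=
        (Nat.one_le_iff_ne_zero.2 hci).trans (single_le_sum (by simp) hi)
      simp only [Finsupp.coe_add, Pi.add_apply, sum_add_distrib]
      exact add_le_add (ih hg hb) hc1
    · rcases mem_union.1 (support_add ha) with ha | ha
      exacts [hg ha, hh ha]

theorem monomial_mem_pow_of_degree_eq {J : Ideal (MvPolynomial σ R)} {d : ℕ}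
    (hJ : ∀ S : Finset σ, #S = d → ∏ i ∈ S, X i ∈ J) {m : ℕ} {c : σ →₀ ℕ}
    (hcm : ∀ i, c i ≤ m) (hc : c.degree = m * d) : monomial c 1 ∈ J ^ m := by
  classical
  induction m generalizing c with
  | zero => simp
  | succ m ih =>
    set A := c.support.filter (c · = m + 1)
    have hA : #A * (m + 1) ≤ (m + 1) * d := calc
      #A * (m + 1) = ∑ i ∈ A, c i := by
        rw [sum_congr rfl fun i hi => (mem_filter.1 hi).2, sum_const, smul_eq_mul]
      _ ≤ ∑ i ∈ c.support, c i := sum_le_sum_of_subset (filter_subset _ _)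
      _ = (m + 1) * d := hc
    have hsupp : (m + 1) * d ≤ #c.support * (m + 1) := calc
      (m + 1) * d = ∑ i ∈ c.support, c i := hc.symm
      _ ≤ #c.support • (m + 1) := sum_le_card_nsmul _ _ _ fun i _ => hcm i
    obtain ⟨S, hAS, hSc, hS⟩ := exists_subsuperset_card_eq (n := d) (filter_subset _ c.support)
      (Nat.le_of_mul_le_mul_left (by linarith) m.succ_pos)
      (Nat.le_of_mul_le_mul_left (by linarith) m.succ_pos)
    set s : σ →₀ ℕ := ∑ i ∈ S, Finsupp.single i 1
    have hs : ∀ i, s i = if i ∈ S then 1 else 0 := fun i => by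
      simp [s, Finsupp.finsetSum_apply, Finsupp.single_apply]
    have hsc : s ≤ c := fun i => by
      rw [hs]
      split_ifs with hi
      exacts [Nat.one_le_iff_ne_zero.2 (Finsupp.mem_support_iff.1 (hSc hi)), Nat.zero_le _]
    have hsdeg : s.degree = d := by simp [s, map_sum, hS]
    rw [← tsub_add_cancel_of_le hsc, ← mul_one (1 : R), ← monomial_mul, pow_succ]
    refine Ideal.mul_mem_mul (ih (fun i => ?_) ?_) ?_
    · have := hcm i
      by_cases hi : i ∈ S
      · rw [Finsupp.tsub_apply, hs, if_pos hi]
        omega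
      · have hiA : i ∉ A := fun h => hi (hAS h)
        simp only [A, mem_filter, Finsupp.mem_support_iff, not_and] at hiA
        rw [Finsupp.tsub_apply, hs, if_neg hi]
        omega
    · have := congrArg Finsupp.degree (tsub_add_cancel_of_le hsc)
      rw [map_add, hsdeg, hc, Nat.succ_mul] at this
      omega
    · rw [monomial_sum_one]
      exact hJ S hS

theorem monomial_mem_pow_of_le_sum_min [Fintype σ] {J : Ideal (MvPolynomial σ R)} {d : ℕ}
    (hJ : ∀ S : Finset σ, #S = d → ∏ i ∈ S, X i ∈ J) {m : ℕ} {a : σ →₀ ℕ}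
    (ha : m * d ≤ ∑ i, min (a i) m) : monomial a 1 ∈ J ^ m := by
  obtain ⟨c, hcb, hc⟩ := (a.mapRange (min · m) (Nat.zero_min m)).exists_le_degree_eq (m * d)
    (by simpa [Finsupp.degree_eq_sum] using ha)
  refine Ideal.mem_of_dvd _ (monomial_dvd_monomial.2 ⟨Or.inr fun i => ?_, one_dvd _⟩)
    (monomial_mem_pow_of_degree_eq hJ (fun i => (hcb i).trans (min_le_right _ _)) hc)
  exact (hcb i).trans (min_le_left _ _)

theorem prod_X_mem_iInf_span_X_image [Fintype σ] {e : ℕ} {S : Finset σ}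
    (hS : Fintype.card σ < #S + e) :
    ∏ i ∈ S, X i ∈ ⨅ s ∈ {s : Finset σ | #s = e},
      (Ideal.span (X '' (s : Set σ)) : Ideal (MvPolynomial σ R)) := by
  classical
  simp only [Ideal.mem_iInf]
  intro s hs
  obtain ⟨i, hi⟩ := inter_nonempty_of_card_lt_card_add_card (subset_univ S) (subset_univ s)
    (by rwa [card_univ, hs])
  exact Ideal.mem_of_dvd _ (dvd_prod_of_mem X (mem_inter.1 hi).1)
    (Ideal.subset_span ⟨i, (mem_inter.1 hi).2, rfl⟩)

end MvPolynomial

theorem stmt_6_general (k : Type*) [Field k] (n e : ℕ) (he1 : 1 ≤ e) (he2 : e ≤ n - 1)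
    (d : ℕ) (hd : d = n - e + 1)
    (I : Ideal (MvPolynomial (Fin n) k))
    (hI : I = ⨅ σ ∈ {s : Finset (Fin n) | s.card = e}, Ideal.span (X '' (σ : Set (Fin n))))
    (t : ℕ) :
    (⨅ σ ∈ {s : Finset (Fin n) | s.card = e},
        (Ideal.span (X '' (σ : Set (Fin n))) : Ideal (MvPolynomial (Fin n) k)) ^ (e * d * t))
      ≤ I ^ (n * t) := by
  subst hI
  intro f hf
  refine mem_of_forall_monomial_one_mem fun a ha => ?_
  have hsum : ∀ s : Finset (Fin n), #s = e → e * (d * t) ≤ ∑ i ∈ s, a i := fun s hs =>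
    mul_assoc e d t ▸
      le_sum_of_mem_span_X_image_pow (Ideal.mem_iInf.1 (Ideal.mem_iInf.1 hf s) hs) ha
  have hmin : n * (d * t) ≤ ∑ i, min (a i) (n * t) := by
    have key := le_sum_min_of_forall_card_eq a (M := n * t) he1
      (by rw [Fintype.card_fin]; omega) (by rw [Fintype.card_fin, ← hd, mul_left_comm]) hsum
    rwa [Fintype.card_fin] at key
  refine monomial_mem_pow_of_le_sum_min (d := d)
    (fun S hS => prod_X_mem_iInf_span_X_image (by rw [Fintype.card_fin, hS]; omega)) ?_
  linarith

/-- the symbolic power `I^{(edt)} = ⋂_σ I_σ^{edt}` is contained in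
`I^{nt}`, where `I = ⋂_σ I_σ` and `σ` ranges over `e`-element subsets of the
variables. -/
theorem stmt_6 (k : Type*) [Field k] (n e : ℕ) (hn : 2 ≤ n) (he1 : 1 ≤ e) (he2 : e ≤ n - 1)
    (d : ℕ) (hd : d = n - e + 1)
    (I : Ideal (MvPolynomial (Fin n) k))
    (hI : I = ⨅ σ ∈ {s : Finset (Fin n) | s.card = e}, Ideal.span (X '' (σ : Set (Fin n))))
    (t : ℕ) (ht : 1 ≤ t) :
    (⨅ σ ∈ {s : Finset (Fin n) | s.card = e},
        (Ideal.span (X '' (σ : Set (Fin n))) : Ideal (MvPolynomial (Fin n) k)) ^ (e * d * t))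
      ≤ I ^ (n * t) :=
  stmt_6_general k n e he1 he2 d hd I hI t
end

section
/- Let k be a field, n ≥ 2, 1 ≤ e ≤ n-1, d = n-e+1. Let I_σ = (x_{i_1},...,x_{i_e}) for each e-element subset σ = {i_1,...,i_e} of {1,...,n}, and let I = ⋂_σ I_σ. Then for every t ≥ 1, ⋂_σ I_σ^{edt} is NOT contained in I^{nt+1}. -/
open MvPolynomial

section Aux

variable {σ : Type*} {R : Type*} [CommRing R] [DecidableEq σ]

/-- The ideal of polynomials all of whose monomials have degree at least `m`. -/
def lowDegIdeal (σ : Type*) (R : Type*) [CommRing R] [DecidableEq σ] (m : ℕ) :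
    Ideal (MvPolynomial σ R) where
  carrier := {f | ∀ μ ∈ f.support, m ≤ μ.sum fun _ e => e}
  zero_mem' := by simp
  add_mem' := by
    intro a b ha hb μ hμ
    rcases Finset.mem_union.mp (MvPolynomial.support_add hμ) with h | h
    · exact ha μ h
    · exact hb μ h
  smul_mem' := by
    intro c f hf μ hμ
    rw [smul_eq_mul] at hμ
    obtain ⟨a, ha, b, hb, rfl⟩ := Finset.mem_add.mp (MvPolynomial.support_mul c f hμ)
    rw [Finsupp.sum_add_index' (fun _ => rfl) (fun _ _ _ => rfl)]
    exact le_add_of_nonneg_of_le (Nat.zero_le _) (hf b hb)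

lemma mem_lowDegIdeal {m : ℕ} {f : MvPolynomial σ R} :
    f ∈ lowDegIdeal σ R m ↔ ∀ μ ∈ f.support, m ≤ μ.sum fun _ e => e := Iff.rfl

lemma lowDegIdeal_mul_le (a b : ℕ) :
    lowDegIdeal σ R a * lowDegIdeal σ R b ≤ lowDegIdeal σ R (a + b) := by
  rw [Ideal.mul_le]
  intro p hp q hq μ hμ
  obtain ⟨x, hx, y, hy, rfl⟩ := Finset.mem_add.mp (MvPolynomial.support_mul p q hμ)
  rw [Finsupp.sum_add_index' (fun _ => rfl) (fun _ _ _ => rfl)]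
  exact Nat.add_le_add (hp x hx) (hq y hy)

lemma pow_le_lowDegIdeal {I : Ideal (MvPolynomial σ R)} {m : ℕ}
    (h : I ≤ lowDegIdeal σ R m) (N : ℕ) : I ^ N ≤ lowDegIdeal σ R (m * N) := by
  induction N with
  | zero =>
    intro f _
    exact fun μ _ => Nat.zero_le _
  | succ N ih =>
    calc I ^ (N + 1) = I ^ N * I := pow_succ I N
    _ ≤ lowDegIdeal σ R (m * N) * lowDegIdeal σ R m := Ideal.mul_mono ih h
    _ ≤ lowDegIdeal σ R (m * N + m) := lowDegIdeal_mul_le _ _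
    _ = lowDegIdeal σ R (m * (N + 1)) := by ring_nf

omit [DecidableEq σ] in
lemma prod_mem_pow_card {ι : Type*} (s : Finset ι) (f : ι → MvPolynomial σ R)
    (P : Ideal (MvPolynomial σ R)) (h : ∀ i ∈ s, f i ∈ P) :
    ∏ i ∈ s, f i ∈ P ^ s.card := by
  classical
  induction s using Finset.cons_induction with
  | empty => simp [Ideal.one_eq_top]
  | cons i s hi ih =>
    rw [Finset.prod_cons, Finset.card_cons, pow_succ']
    exact Ideal.mul_mem_mul (h i (Finset.mem_cons_self i s))
      (ih fun j hj => h j (Finset.mem_cons_of_mem hj))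

end Aux

/-- the symbolic power `I^{(edt)} = ⋂_σ I_σ^{edt}` is NOT contained in
`I^{nt+1}`, where `I = ⋂_σ I_σ` and `σ` ranges over `e`-element subsets of the
variables. -/
theorem stmt_7 (k : Type*) [Field k] (n e : ℕ) (hn : 2 ≤ n) (he1 : 1 ≤ e) (he2 : e ≤ n - 1)
    (d : ℕ) (hd : d = n - e + 1)
    (I : Ideal (MvPolynomial (Fin n) k))
    (hI : I = ⨅ σ ∈ {s : Finset (Fin n) | s.card = e}, Ideal.span (X '' (σ : Set (Fin n))))
    (t : ℕ) (ht : 1 ≤ t) :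
    ¬ ((⨅ σ ∈ {s : Finset (Fin n) | s.card = e},
        (Ideal.span (X '' (σ : Set (Fin n))) : Ideal (MvPolynomial (Fin n) k)) ^ (e * d * t))
      ≤ I ^ (n * t + 1)) := by
  classical
  intro hle
  have hen : e ≤ n := le_trans he2 (Nat.sub_le n 1)
  have hd1 : 1 ≤ d := by omega
  have hdt : 1 ≤ d * t := Nat.one_le_iff_ne_zero.mpr (Nat.mul_ne_zero (by omega) (by omega))
  -- the witness monomial
  set w : MvPolynomial (Fin n) k := (∏ i : Fin n, X i) ^ (d * t) with hw
  have hw' : w = ∏ i : Fin n, (X i : MvPolynomial (Fin n) k) ^ (d * t) := by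
    rw [hw, Finset.prod_pow]
  -- w belongs to the LHS
  have hmem : w ∈ ⨅ σ ∈ {s : Finset (Fin n) | s.card = e},
      (Ideal.span (X '' (σ : Set (Fin n))) : Ideal (MvPolynomial (Fin n) k)) ^ (e * d * t) := by
    rw [Ideal.mem_iInf]
    intro σ
    rw [Ideal.mem_iInf]
    intro hσ
    have hσc : σ.card = e := hσ
    set P : Ideal (MvPolynomial (Fin n) k) := Ideal.span (X '' (σ : Set (Fin n))) with hP
    have h1 : ∏ i ∈ σ, (X i : MvPolynomial (Fin n) k) ^ (d * t) ∈ (P ^ (d * t)) ^ σ.card := by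
      apply prod_mem_pow_card
      intro i hi
      exact Ideal.pow_mem_pow (Ideal.subset_span (Set.mem_image_of_mem X (by simpa using hi))) _
    rw [← pow_mul, hσc] at h1
    have heq : e * d * t = d * t * e := by ring
    rw [heq]
    have hsplit : w = (∏ i ∈ σ, (X i : MvPolynomial (Fin n) k) ^ (d * t)) *
        ∏ i ∈ σᶜ, (X i : MvPolynomial (Fin n) k) ^ (d * t) := by
      rw [hw', ← Finset.prod_mul_prod_compl σ fun i => (X i : MvPolynomial (Fin n) k) ^ (d * t)]
    rw [hsplit]
    exact Ideal.mul_mem_right _ _ h1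
  -- I is contained in the ideal of polynomials of low degree ≥ d
  have hIlow : I ≤ lowDegIdeal (Fin n) k d := by
    intro f hf μ hμ
    by_contra hlt
    push_neg at hlt
    -- the support of μ has at most n - e elements
    have hcard : μ.support.card ≤ μ.sum fun _ e => e := by
      rw [Finsupp.sum]
      calc μ.support.card = ∑ _i ∈ μ.support, 1 := by simp
      _ ≤ ∑ i ∈ μ.support, μ i := Finset.sum_le_sum fun i hi =>
          Nat.one_le_iff_ne_zero.mpr (Finsupp.mem_support_iff.mp hi)
    have hcard2 : μ.support.card ≤ n - e := by omega
    have hcompl : e ≤ μ.supportᶜ.card := by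
      have := Finset.card_compl (μ.support) (α := Fin n)
      rw [this, Fintype.card_fin]
      omega
    obtain ⟨σ, hσsub, hσcard⟩ := Finset.exists_subset_card_eq hcompl
    have hfσ : f ∈ Ideal.span (X '' (σ : Set (Fin n)) : Set (MvPolynomial (Fin n) k)) := by
      rw [hI] at hf
      rw [Ideal.mem_iInf] at hf
      have := hf σ
      rw [Ideal.mem_iInf] at this
      exact this hσcard
    rw [mem_ideal_span_X_image] at hfσ
    obtain ⟨i, hiσ, hi0⟩ := hfσ μ hμ
    have : i ∈ μ.supportᶜ := hσsub hiσ
    rw [Finset.mem_compl, Finsupp.notMem_support_iff] at this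
    exact hi0 this
  -- hence w ∈ lowDegIdeal (d * (n*t+1))
  have hwlow : w ∈ lowDegIdeal (Fin n) k (d * (n * t + 1)) :=
    pow_le_lowDegIdeal hIlow (n * t + 1) (hle hmem)
  -- but w is the monomial with all exponents d*t, of total degree n*d*t < d*(n*t+1)
  set μ0 : Fin n →₀ ℕ := Finsupp.equivFunOnFinite.symm fun _ => d * t with hμ0
  have hμ0app : ∀ i, μ0 i = d * t := fun i => rfl
  have hμ0supp : μ0.support = Finset.univ := by
    ext i
    simp [Finsupp.mem_support_iff, hμ0app i]
    omega
  have hwmono : w = monomial μ0 (1 : k) := by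
    rw [← prod_X_pow_eq_monomial, hμ0supp, hw']
    exact Finset.prod_congr rfl fun i _ => by rw [hμ0app i]
  have hμ0mem : μ0 ∈ w.support := by
    rw [hwmono, support_monomial, if_neg (one_ne_zero : (1 : k) ≠ 0)]
    exact Finset.mem_singleton_self _
  have hbound := hwlow μ0 hμ0mem
  have hμ0sum : (μ0.sum fun _ e => e) = n * (d * t) := by
    rw [Finsupp.sum, hμ0supp]
    simp only [hμ0app]
    rw [Finset.sum_const, Finset.card_univ, Fintype.card_fin, smul_eq_mul]
  rw [hμ0sum] at hbound
  nlinarith [hbound, hd1, ht, hn]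
end

section
/- Let k be a field and I = (x_1,x_2) ∩ (x_2,x_3) ∩ (x_1,x_3) ⊆ k[x_1,x_2,x_3]. Then for every t ≥ 1: (x_1x_2)^{t}(x_2x_3)^{t}(x_1x_3)^{t} = (x_1x_2x_3)^{2t} lies in (x_1,x_2)^{4t} ∩ (x_2,x_3)^{4t} ∩ (x_1,x_3)^{4t} but does not lie in I^{3t+1}. -/
open MvPolynomial

/-!
Each of the three primes `(xᵢ, xⱼ)` contains `xᵢ^{2t} xⱼ^{2t}`, a product of `4t` of its
generators, which divides `(x₁x₂x₃)^{2t}`. On the other hand every monomial of `I` involves two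
distinct variables, so `I ⊆ 𝔪²` for `𝔪 = (x₁, x₂, x₃)`, hence `I^{3t+1} ⊆ 𝔪^{6t+2}`, which
contains no nonzero form of degree `6t`.
-/

namespace MvPolynomial

variable {σ R : Type*} [CommSemiring R]

lemma IsHomogeneous.le_of_mem_pow_idealOfVars {p : MvPolynomial σ R} {m n : ℕ}
    (hp : p.IsHomogeneous n) (hp₀ : p ≠ 0) (hmem : p ∈ idealOfVars σ R ^ m) : m ≤ n := by
  obtain ⟨d, hd⟩ := support_nonempty.mpr hp₀
  rw [mem_pow_idealOfVars_iff] at hmem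
  rw [← hp (mem_support_iff.mp hd), Pi.one_def, ← Finsupp.degree_eq_weight_one]
  exact hmem d hd

lemma mem_span_X_pair_iff {p : MvPolynomial σ R} {i j : σ} :
    p ∈ Ideal.span {X i, X j} ↔ ∀ d ∈ p.support, d i ≠ 0 ∨ d j ≠ 0 := by
  rw [← Set.image_pair, mem_ideal_span_X_image]
  simp

lemma X_pow_mul_X_pow_mem_span_pow (i j : σ) (a b : ℕ) :
    (X i ^ a * X j ^ b : MvPolynomial σ R) ∈ Ideal.span {X i, X j} ^ (a + b) := by
  rw [pow_add]
  exact Ideal.mul_mem_mul (Ideal.pow_mem_pow (Ideal.subset_span (by simp)) a)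
    (Ideal.pow_mem_pow (Ideal.subset_span (by simp)) b)

lemma span_X_pairs_inf_le_sq_idealOfVars :
    (Ideal.span {X 0, X 1} ⊓ Ideal.span {X 1, X 2} ⊓ Ideal.span {X 0, X 2} :
      Ideal (MvPolynomial (Fin 3) R)) ≤ idealOfVars (Fin 3) R ^ 2 := by
  rintro p ⟨⟨h01, h12⟩, h02⟩
  rw [SetLike.mem_coe, mem_span_X_pair_iff] at h01 h12 h02
  rw [mem_pow_idealOfVars_iff]
  intro d hd
  have := h01 d hd
  have := h12 d hd
  have := h02 d hd
  rw [Finsupp.degree_eq_sum, Fin.sum_univ_three]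
  omega

end MvPolynomial

theorem stmt_8_general (k : Type*) [Field k]
    (I : Ideal (MvPolynomial (Fin 3) k))
    (hI : I = Ideal.span {X 0, X 1} ⊓ Ideal.span {X 1, X 2} ⊓ Ideal.span {X 0, X 2})
    (t : ℕ) :
    (X 0 * X 1 * X 2 : MvPolynomial (Fin 3) k) ^ (2 * t) ∈
        (Ideal.span {X 0, X 1}) ^ (4 * t) ⊓ (Ideal.span {X 1, X 2}) ^ (4 * t) ⊓
          (Ideal.span {X 0, X 2}) ^ (4 * t) ∧
      (X 0 * X 1 * X 2 : MvPolynomial (Fin 3) k) ^ (2 * t) ∉ I ^ (3 * t + 1) := by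
  constructor
  · rw [mul_pow, mul_pow, show 4 * t = 2 * t + 2 * t by ring]
    refine ⟨⟨?_, ?_⟩, ?_⟩
    · exact Ideal.mul_mem_right _ _ (X_pow_mul_X_pow_mem_span_pow 0 1 _ _)
    · rw [mul_assoc]
      exact Ideal.mul_mem_left _ _ (X_pow_mul_X_pow_mem_span_pow 1 2 _ _)
    · rw [mul_right_comm]
      exact Ideal.mul_mem_right _ _ (X_pow_mul_X_pow_mem_span_pow 0 2 _ _)
  intro hmem
  have hI_le : I ^ (3 * t + 1) ≤ idealOfVars (Fin 3) k ^ (6 * t + 2) := by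
    rw [show 6 * t + 2 = 2 * (3 * t + 1) by ring, pow_mul, hI]
    exact Ideal.pow_right_mono span_X_pairs_inf_le_sq_idealOfVars _
  have hhom : ((X 0 * X 1 * X 2 : MvPolynomial (Fin 3) k) ^ (2 * t)).IsHomogeneous (6 * t) := by
    rw [show 6 * t = 3 * (2 * t) by ring]
    exact (((isHomogeneous_X k 0).mul (isHomogeneous_X k 1)).mul (isHomogeneous_X k 2)).pow _
  have := hhom.le_of_mem_pow_idealOfVars (pow_ne_zero _ (by simp [X_ne_zero])) (hI_le hmem)
  omega

/-- for `I = (x₁,x₂) ∩ (x₂,x₃) ∩ (x₁,x₃)` in `k[x₁,x₂,x₃]`, the monomial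
`(x₁x₂x₃)^{2t}` lies in `(x₁,x₂)^{4t} ∩ (x₂,x₃)^{4t} ∩ (x₁,x₃)^{4t}` but not in
`I^{3t+1}`. -/
theorem stmt_8 (k : Type*) [Field k]
    (I : Ideal (MvPolynomial (Fin 3) k))
    (hI : I = Ideal.span {X 0, X 1} ⊓ Ideal.span {X 1, X 2} ⊓ Ideal.span {X 0, X 2})
    (t : ℕ) (ht : 1 ≤ t) :
    (X 0 * X 1 * X 2 : MvPolynomial (Fin 3) k) ^ (2 * t) ∈
        (Ideal.span {X 0, X 1}) ^ (4 * t) ⊓ (Ideal.span {X 1, X 2}) ^ (4 * t) ⊓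
          (Ideal.span {X 0, X 2}) ^ (4 * t) ∧
      (X 0 * X 1 * X 2 : MvPolynomial (Fin 3) k) ^ (2 * t) ∉ I ^ (3 * t + 1) :=
  stmt_8_general k I hI t
end

section
/- Let k be a field and I = (x_1x_2, x_2x_3, x_1x_3) ⊆ k[x_1,x_2,x_3]. Then for every t ≥ 1, (x_1,x_2)^{4t} ∩ (x_2,x_3)^{4t} ∩ (x_1,x_3)^{4t} ⊆ I^{3t}. -/
/-!
Every monomial of a polynomial in `(x_i, x_j)^n` has `x_i`- plus `x_j`-degree at least `n`,
since these ideals are contained in the monomial ideals cut out by a lower bound on a weight.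
So every monomial `x₀^a x₁^b x₂^c` of an element of the intersection has `a + b`, `b + c`, `a + c`
all `≥ 4t`, hence `a + b + c ≥ 6t`, and these inequalities are exactly what is needed to find a
product of `3t` edge monomials `x_i x_j` dividing it.
-/

open MvPolynomial

/-- `(p, q, r)` are the exponents of `x₀x₁`, `x₁x₂`, `x₀x₂` in a product of `s` such monomials
dividing `x₀^a x₁^b x₂^c`. -/
lemma exists_edge_exponents {a b c s : ℕ} (hab : s ≤ a + b) (hbc : s ≤ b + c)
    (hac : s ≤ a + c) (habc : 2 * s ≤ a + b + c) :
    ∃ p q r, p + q + r = s ∧ p + r ≤ a ∧ p + q ≤ b ∧ q + r ≤ c :=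
  ⟨s - c, s - a, s - (s - c) - (s - a), by omega, by omega, by omega, by omega⟩

lemma Finsupp.monotone_weight {σ : Type*} (w : σ → ℕ) : Monotone (Finsupp.weight (R := ℕ) w) := by
  intro m m' h
  obtain ⟨d, rfl⟩ := le_iff_exists_add.mp h
  simp

namespace MvPolynomial

variable {σ R : Type*} [CommSemiring R]

variable (R) in
noncomputable def weightGeIdeal (w : σ → ℕ) (n : ℕ) : Ideal (MvPolynomial σ R) :=
  restrictSupportIdeal R (Finsupp.weight w ⁻¹' Set.Ici n)
    ((isUpperSet_Ici n).preimage (Finsupp.monotone_weight w))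

variable {w : σ → ℕ}

lemma mem_weightGeIdeal {n : ℕ} {p : MvPolynomial σ R} :
    p ∈ weightGeIdeal R w n ↔ ∀ m ∈ p.support, n ≤ Finsupp.weight w m :=
  mem_restrictSupport_iff R

lemma weightGeIdeal_antitone : Antitone (weightGeIdeal R w) :=
  fun _ _ hab _ hp => mem_weightGeIdeal.mpr fun m hm => hab.trans (mem_weightGeIdeal.mp hp m hm)

lemma weightGeIdeal_zero : weightGeIdeal R w 0 = ⊤ :=
  eq_top_iff.mpr fun _ _ => mem_weightGeIdeal.mpr fun _ _ => Nat.zero_le _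

lemma weightGeIdeal_mul_le (a b : ℕ) :
    weightGeIdeal R w a * weightGeIdeal R w b ≤ weightGeIdeal R w (a + b) := by
  classical
  refine Ideal.mul_le.mpr fun p hp q hq => mem_weightGeIdeal.mpr fun m hm => ?_
  obtain ⟨u, hu, v, hv, rfl⟩ := Finset.mem_add.mp (support_mul p q hm)
  rw [map_add]
  exact add_le_add (mem_weightGeIdeal.mp hp u hu) (mem_weightGeIdeal.mp hq v hv)

lemma pow_le_weightGeIdeal {J : Ideal (MvPolynomial σ R)} (hJ : J ≤ weightGeIdeal R w 1) (n : ℕ) :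
    J ^ n ≤ weightGeIdeal R w n := by
  induction n with
  | zero => simp [weightGeIdeal_zero]
  | succ n ih => exact (pow_succ J n ▸ Ideal.mul_mono ih hJ).trans (weightGeIdeal_mul_le n 1)

lemma X_mem_weightGeIdeal (i : σ) : X i ∈ weightGeIdeal R w (w i) :=
  mem_weightGeIdeal.mpr fun m hm => by
    rw [Finset.mem_singleton.mp (support_monomial_subset hm), Finsupp.weight_single, one_smul]

lemma le_add_of_mem_span_X_pair_pow {i j : σ} {n : ℕ} {p : MvPolynomial σ R}
    (hp : p ∈ Ideal.span {X i, X j} ^ n) {m : σ →₀ ℕ} (hm : m ∈ p.support) :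
    n ≤ m i + m j := by
  classical
  let w : σ → ℕ := Pi.single i 1 + Pi.single j 1
  have hspan : Ideal.span {X i, X j} ≤ weightGeIdeal R w 1 := by
    refine Ideal.span_le.mpr (Set.insert_subset_iff.mpr ⟨?_, Set.singleton_subset_iff.mpr ?_⟩) <;>
    exact weightGeIdeal_antitone (by simp [w]) (X_mem_weightGeIdeal _)
  have hw : Finsupp.weight w m = m i + m j := by
    simp only [w, Finsupp.weight_apply, Pi.add_apply, smul_add, Finsupp.sum_add]
    rw [← Finsupp.weight_apply, ← Finsupp.weight_apply, Finsupp.weight_single_one_apply,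
      Finsupp.weight_single_one_apply]
  exact hw ▸ mem_weightGeIdeal.mp (pow_le_weightGeIdeal hspan n hp) m hm

lemma monomial_mem_span_edges_pow (m : Fin 3 →₀ ℕ) (r : R) {s : ℕ} (h01 : s ≤ m 0 + m 1)
    (h12 : s ≤ m 1 + m 2) (h02 : s ≤ m 0 + m 2) (hsum : 2 * s ≤ m 0 + m 1 + m 2) :
    monomial m r ∈
      (Ideal.span {X 0 * X 1, X 1 * X 2, X 0 * X 2} : Ideal (MvPolynomial (Fin 3) R)) ^ s := by
  obtain ⟨p, q, t, rfl, h0, h1, h2⟩ := exists_edge_exponents h01 h12 h02 hsum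
  have hprod : (X 0 * X 1) ^ p * (X 1 * X 2) ^ q * (X 0 * X 2) ^ t ∈
      (Ideal.span {X 0 * X 1, X 1 * X 2, X 0 * X 2} : Ideal (MvPolynomial (Fin 3) R)) ^
        (p + q + t) := by
    rw [pow_add, pow_add]
    exact Ideal.mul_mem_mul (Ideal.mul_mem_mul (Ideal.pow_mem_pow (Ideal.subset_span (by simp)) p)
      (Ideal.pow_mem_pow (Ideal.subset_span (by simp)) q))
      (Ideal.pow_mem_pow (Ideal.subset_span (by simp)) t)
  refine Ideal.mem_of_dvd _ ?_ hprod
  rw [monomial_eq, Finsupp.prod_pow, Fin.prod_univ_three]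
  calc ((X 0 * X 1) ^ p * (X 1 * X 2) ^ q * (X 0 * X 2) ^ t : MvPolynomial (Fin 3) R)
      = X 0 ^ (p + t) * X 1 ^ (p + q) * X 2 ^ (q + t) := by ring
    _ ∣ X 0 ^ m 0 * X 1 ^ m 1 * X 2 ^ m 2 :=
      mul_dvd_mul (mul_dvd_mul (pow_dvd_pow _ h0) (pow_dvd_pow _ h1)) (pow_dvd_pow _ h2)
    _ ∣ C r * (X 0 ^ m 0 * X 1 ^ m 1 * X 2 ^ m 2) := dvd_mul_left _ _

end MvPolynomial

theorem stmt_9_general (k : Type*) [Field k]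
    (I : Ideal (MvPolynomial (Fin 3) k))
    (hI : I = Ideal.span {X 0 * X 1, X 1 * X 2, X 0 * X 2})
    (t : ℕ) :
    (Ideal.span {X 0, X 1} : Ideal (MvPolynomial (Fin 3) k)) ^ (4 * t) ⊓
        (Ideal.span {X 1, X 2}) ^ (4 * t) ⊓ (Ideal.span {X 0, X 2}) ^ (4 * t)
      ≤ I ^ (3 * t) := by
  rintro p ⟨⟨hp01, hp12⟩, hp02⟩
  rw [p.as_sum, hI]
  refine Ideal.sum_mem _ fun m hm => ?_
  have h01 := le_add_of_mem_span_X_pair_pow hp01 hm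
  have h12 := le_add_of_mem_span_X_pair_pow hp12 hm
  have h02 := le_add_of_mem_span_X_pair_pow hp02 hm
  exact monomial_mem_span_edges_pow m _ (by omega) (by omega) (by omega) (by omega)

/-- for `I = (x₁x₂, x₂x₃, x₁x₃)` in `k[x₁,x₂,x₃]`, one has
`(x₁,x₂)^{4t} ∩ (x₂,x₃)^{4t} ∩ (x₁,x₃)^{4t} ⊆ I^{3t}` for every `t ≥ 1`. -/
theorem stmt_9 (k : Type*) [Field k]
    (I : Ideal (MvPolynomial (Fin 3) k))
    (hI : I = Ideal.span {X 0 * X 1, X 1 * X 2, X 0 * X 2})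
    (t : ℕ) (ht : 1 ≤ t) :
    (Ideal.span {X 0, X 1} : Ideal (MvPolynomial (Fin 3) k)) ^ (4 * t) ⊓
        (Ideal.span {X 1, X 2}) ^ (4 * t) ⊓ (Ideal.span {X 0, X 2}) ^ (4 * t)
      ≤ I ^ (3 * t) :=
  stmt_9_general k I hI t
end

section
/- Let k be a field and I = (x_1x_2, x_2x_3, x_1x_3) ⊆ k[x_1,x_2,x_3], with symbolic powers I^{(m)} = (x_1,x_2)^m ∩ (x_2,x_3)^m ∩ (x_1,x_3)^m. There is no constant c ∈ ℕ such that I^{(p+c)} ⊆ I^p for all sufficiently large p. -/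
open MvPolynomial

/-- for `I = (x₁x₂, x₂x₃, x₁x₃)` with symbolic powers
`I^{(m)} = (x₁,x₂)^m ∩ (x₂,x₃)^m ∩ (x₁,x₃)^m`, there is no constant `c` such that
`I^{(p+c)} ⊆ I^p` for all sufficiently large `p`. -/
theorem stmt_10 (k : Type*) [Field k]
    (I : Ideal (MvPolynomial (Fin 3) k))
    (hI : I = Ideal.span {X 0 * X 1, X 1 * X 2, X 0 * X 2})
    (symb : ℕ → Ideal (MvPolynomial (Fin 3) k))
    (hsymb : ∀ m, symb m =
      (Ideal.span {X 0, X 1}) ^ m ⊓ (Ideal.span {X 1, X 2}) ^ m ⊓ (Ideal.span {X 0, X 2}) ^ m) :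
    ¬ ∃ c : ℕ, ∃ N : ℕ, ∀ p : ℕ, N ≤ p → symb (p + c) ≤ I ^ p := by
  rintro ⟨c, N, h⟩
  set M : ℕ := N + 3 * c + 1 with hM
  set p : ℕ := c + 2 * M with hp
  set s : ℕ := c + M with hs
  have hps : p + c = 2 * s := by omega
  have hNp : N ≤ p := by omega
  set f : MvPolynomial (Fin 3) k := (X 0 * X 1 * X 2) ^ s with hf
  -- f lies in symb (p + c)
  have hmem : f ∈ symb (p + c) := by
    rw [hsymb, hps]
    have key : ∀ (i j l : Fin 3), X i * X j * X l ∈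
        (Ideal.span {X i, X j} : Ideal (MvPolynomial (Fin 3) k)) ^ 2 := by
      intro i j l
      have hi : (X i : MvPolynomial (Fin 3) k) ∈ Ideal.span {X i, X j} :=
        Ideal.subset_span (by simp)
      have hj : (X j : MvPolynomial (Fin 3) k) ∈ Ideal.span {X i, X j} :=
        Ideal.subset_span (by simp)
      have hjl : (X j * X l : MvPolynomial (Fin 3) k) ∈ Ideal.span {X i, X j} :=
        Ideal.mul_mem_right _ _ hj
      have := Ideal.mul_mem_mul hi hjl
      rw [sq]
      convert this using 1
      ring
    refine ⟨⟨?_, ?_⟩, ?_⟩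
    · have h1 := Ideal.pow_mem_pow (key 0 1 2) s
      rw [← pow_mul] at h1
      exact h1
    · have h1 := Ideal.pow_mem_pow (key 1 2 0) s
      rw [← pow_mul] at h1
      have heq : ((X 1 * X 2 * X 0 : MvPolynomial (Fin 3) k)) ^ s
          = f := by rw [hf]; ring
      rwa [heq] at h1
    · have h1 := Ideal.pow_mem_pow (key 0 2 1) s
      rw [← pow_mul] at h1
      have heq : ((X 0 * X 2 * X 1 : MvPolynomial (Fin 3) k)) ^ s
          = f := by rw [hf]; ring
      rwa [heq] at h1
  have hfI : f ∈ I ^ p := h p hNp hmem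
  -- map to k[X] by sending every variable to X
  let φ : MvPolynomial (Fin 3) k →ₐ[k] Polynomial k := aeval (fun _ => Polynomial.X)
  have hmapI : Ideal.map (φ : MvPolynomial (Fin 3) k →+* Polynomial k) I ≤
      Ideal.span {Polynomial.X ^ 2} := by
    rw [Ideal.map_le_iff_le_comap, hI, Ideal.span_le]
    intro g hg
    simp only [Set.mem_insert_iff, Set.mem_singleton_iff] at hg
    rcases hg with rfl | rfl | rfl <;>
    · refine Ideal.mem_comap.mpr (Ideal.subset_span ?_)
      simp [φ, sq]
  have hφf : φ f ∈ Ideal.span {Polynomial.X ^ (2 * p)} := by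
    have h1 : φ f ∈ Ideal.map (φ : MvPolynomial (Fin 3) k →+* Polynomial k) (I ^ p) :=
      Ideal.mem_map_of_mem _ hfI
    rw [Ideal.map_pow] at h1
    have h2 : Ideal.map (φ : MvPolynomial (Fin 3) k →+* Polynomial k) I ^ p ≤
        (Ideal.span {Polynomial.X ^ 2}) ^ p := Ideal.pow_right_mono hmapI p
    have h3 := h2 h1
    rwa [Ideal.span_singleton_pow, ← pow_mul] at h3
  have hφfval : φ f = Polynomial.X ^ (3 * s) := by
    simp only [hf, map_pow, map_mul, aeval_X, φ]
    ring
  rw [hφfval, Ideal.mem_span_singleton] at hφf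
  have hdeg := Polynomial.natDegree_le_of_dvd hφf (by
    exact pow_ne_zero _ Polynomial.X_ne_zero)
  simp only [Polynomial.natDegree_pow, Polynomial.natDegree_X, mul_one] at hdeg
  omega
end

section
/- Let n ≥ 2, 1 ≤ e ≤ n-1, d = n-e+1, t ≥ 1. Suppose a = (a_1,...,a_n) ∈ ℕ^n satisfies a_1 + ··· + a_n ≥ ndt and a_{i_1} + ··· + a_{i_e} ≥ edt for every e-element subset {i_1,...,i_e} of {1,...,n}. Then there exists b = (b_1,...,b_n) ∈ ℕ^n with b_i ≤ a_i for all i, b_1 + ··· + b_n = ndt, and b_i ≤ nt for all i. -/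
/-- Any `c` with sum at least `N` dominates some `b` with sum exactly `N`. -/
lemma exists_le_sum_eq {ι : Type*} [DecidableEq ι] (s : Finset ι) (c : ι → ℕ) (N : ℕ)
    (h : N ≤ ∑ i ∈ s, c i) : ∃ b : ι → ℕ, (∀ i, b i ≤ c i) ∧ ∑ i ∈ s, b i = N := by
  induction s using Finset.induction_on generalizing N with
  | empty =>
    simp at h
    exact ⟨fun _ => 0, fun _ => Nat.zero_le _, by simpa using h.symm⟩
  | @insert j s' hj ih =>
    rw [Finset.sum_insert hj] at h
    set M := min N (c j) with hM
    have h' : N - M ≤ ∑ i ∈ s', c i := by omega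
    obtain ⟨b, hb1, hb2⟩ := ih (N - M) h'
    refine ⟨fun i => if i = j then M else b i, ?_, ?_⟩
    · intro i
      by_cases hi : i = j
      · simp [hi]; omega
      · simpa [hi] using hb1 i
    · rw [Finset.sum_insert hj]
      have : ∑ i ∈ s', (if i = j then M else b i) = ∑ i ∈ s', b i := by
        apply Finset.sum_congr rfl
        intro i hi
        have : i ≠ j := fun h => hj (h ▸ hi)
        simp [this]
      rw [this, hb2, if_pos rfl]
      omega

/-- If every `e`-subset has `a`-sum at least `e·m`, then every `T` with `|T| ≥ e`
has `a`-sum at least `|T|·m`. -/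
lemma key {n : ℕ} (e m : ℕ) (he : 1 ≤ e) (a : Fin n → ℕ)
    (ha : ∀ σ : Finset (Fin n), σ.card = e → e * m ≤ ∑ i ∈ σ, a i) :
    ∀ T : Finset (Fin n), e ≤ T.card → T.card * m ≤ ∑ i ∈ T, a i := by
  intro T
  induction T using Finset.strongInduction with
  | _ T ih =>
    intro hT
    rcases eq_or_lt_of_le hT with heq | hlt
    · rw [← heq]
      exact ha T heq.symm
    · -- pick a maximal element j of T
      have hne : T.Nonempty := Finset.card_pos.mp (by omega)
      obtain ⟨j, hjT, hjmax⟩ := T.exists_max_image a hne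
      have herase : (T.erase j).card = T.card - 1 := Finset.card_erase_of_mem hjT
      have hsub : T.erase j ⊂ T := Finset.erase_ssubset hjT
      have hecard : e ≤ (T.erase j).card := by omega
      have IH := ih (T.erase j) hsub hecard
      -- show m ≤ a j using an e-subset of T containing j
      obtain ⟨σ', hσ'sub, hσ'card⟩ := Finset.exists_subset_card_eq
        (s := T.erase j) (n := e - 1) (by omega)
      have hjσ' : j ∉ σ' := fun h => (Finset.notMem_erase j T) (hσ'sub h)
      set σ := insert j σ' with hσ
      have hσcard : σ.card = e := by
        rw [hσ, Finset.card_insert_of_notMem hjσ']; omega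
      have hσT : σ ⊆ T := by
        intro i hi
        rcases Finset.mem_insert.mp hi with h | h
        · exact h ▸ hjT
        · exact Finset.erase_subset _ _ (hσ'sub h)
      have hbound : ∑ i ∈ σ, a i ≤ e * a j := by
        calc ∑ i ∈ σ, a i ≤ ∑ _i ∈ σ, a j :=
              Finset.sum_le_sum (fun i hi => hjmax i (hσT hi))
          _ = σ.card * a j := by rw [Finset.sum_const, smul_eq_mul]
          _ = e * a j := by rw [hσcard]
      have hmj : m ≤ a j := by
        have h1 := ha σ hσcard
        have := h1.trans hbound
        exact Nat.le_of_mul_le_mul_left this he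
      have hsum : ∑ i ∈ T, a i = a j + ∑ i ∈ T.erase j, a i :=
        (Finset.add_sum_erase T a hjT).symm
      rw [hsum]
      have : (T.card - 1) * m ≤ ∑ i ∈ T.erase j, a i := herase ▸ IH
      have hT1 : 1 ≤ T.card := by omega
      have h4 : T.card * m = (T.card - 1) * m + 1 * m := by
        rw [← Nat.add_mul]; congr 1; omega
      rw [h4, one_mul]
      omega

/-- the truncation step.  If `a ∈ ℕ^n` has `∑ a i ≥ ndt` and every
`e`-element subset has coordinate sum `≥ edt`, then there is `b ≤ a` componentwise
with `∑ b i = ndt` and all `b i ≤ nt`. -/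
theorem stmt_12 (n e : ℕ) (hn : 2 ≤ n) (he1 : 1 ≤ e) (he2 : e ≤ n - 1)
    (d : ℕ) (hd : d = n - e + 1) (t : ℕ) (ht : 1 ≤ t)
    (a : Fin n → ℕ) (hsum : n * d * t ≤ ∑ i, a i)
    (ha : ∀ σ : Finset (Fin n), σ.card = e → e * d * t ≤ ∑ i ∈ σ, a i) :
    ∃ b : Fin n → ℕ, (∀ i, b i ≤ a i) ∧ (∑ i, b i = n * d * t) ∧ ∀ i, b i ≤ n * t := by
  set c : Fin n → ℕ := fun i => min (a i) (n * t) with hc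
  set S : Finset (Fin n) := Finset.univ.filter (fun i => n * t < a i) with hS
  set Sc : Finset (Fin n) := Finset.univ.filter (fun i => ¬ n * t < a i) with hSc
  have hcards : S.card + Sc.card = n := by
    rw [hS, hSc, Finset.card_filter_add_card_filter_not]
    simp
  have hdn : d ≤ n := by omega
  have hsplit : ∑ i, c i = S.card * (n * t) + ∑ i ∈ Sc, a i := by
    rw [← Finset.sum_filter_add_sum_filter_not Finset.univ (fun i => n * t < a i) c]
    congr 1
    · rw [← hS]
      rw [Finset.sum_congr rfl (fun i hi => ?_), Finset.sum_const, smul_eq_mul]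
      rw [hS] at hi
      simp only [Finset.mem_filter] at hi
      simp [hc, Nat.min_eq_right (le_of_lt hi.2)]
    · rw [← hSc]
      apply Finset.sum_congr rfl
      intro i hi
      rw [hSc] at hi
      simp only [Finset.mem_filter] at hi
      simp [hc, Nat.min_eq_left (not_lt.mp hi.2)]
  have hbig : n * d * t ≤ ∑ i, c i := by
    by_cases hcase : d ≤ S.card
    · rw [hsplit]
      have h0 : n * d * t = d * (n * t) := by ring
      have : d * (n * t) ≤ S.card * (n * t) := Nat.mul_le_mul_right _ hcase
      omega
    · push_neg at hcase
      have heS : e ≤ Sc.card := by omega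
      have hkey := key e (d * t) he1 a
        (fun σ hσ => by have := ha σ hσ; linarith [this, (mul_assoc e d t).symm.le])
        Sc heS
      rw [hsplit]
      have h1 : S.card * (d * t) ≤ S.card * (n * t) :=
        Nat.mul_le_mul_left _ (Nat.mul_le_mul_right _ hdn)
      have h2 : n * d * t = S.card * (d * t) + Sc.card * (d * t) := by
        rw [← Nat.add_mul, hcards]; ring
      omega
  obtain ⟨b, hb1, hb2⟩ := exists_le_sum_eq Finset.univ c (n * d * t) hbig
  refine ⟨b, fun i => (hb1 i).trans (min_le_left _ _), hb2,
    fun i => (hb1 i).trans (min_le_right _ _)⟩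
end

section
/- Let k be a field, n ≥ 2, 1 ≤ e ≤ n-1, d = n-e+1, and let I ⊆ k[x_1,...,x_n] be the ideal generated by all squarefree monomials of degree d, with I_σ = (x_{i_1},...,x_{i_e}) for e-subsets σ. If r, m ∈ ℕ satisfy r·n/e ≥ d·m (i.e., r·n ≥ e·d·m), then ⋂_σ I_σ^{r} ⊆ I^{m}. -/
/-!
Write `I_σ = (x_i : i ∈ σ)`. A monomial `x^a` lies in every `I_σ^r` iff every `e`-subset of
coordinates of `a` sums to at least `r`. Averaging over `e`-subsets, together with the budget
`r·n ≥ e·d·m`, shows that the truncated exponent `min(a, m)` has total at least `d·m`; and any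
exponent with that property can be peeled, `m` times, by a squarefree monomial of degree `d`
(always taking the coordinates that are still large), which puts `x^a` in `I^m`.
-/

open MvPolynomial

section

variable {ι : Type*}

theorem Finset.card_mul_le_mul_sum_of_forall_le_sum (a : ι → ℕ) {e r : ℕ} (U : Finset ι)
    (h : ∀ σ ⊆ U, σ.card = e → r ≤ ∑ i ∈ σ, a i) (hU : e ≤ U.card) :
    U.card * r ≤ e * ∑ i ∈ U, a i := by
  classical
  induction U using Finset.strongInduction with
  | H U ih =>
    obtain hUe | hUe := hU.eq_or_lt
    · rw [← hUe]
      exact Nat.mul_le_mul_left e (h U subset_rfl hUe.symm)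
    -- remove a coordinate `j` where `a` is maximal: any `e`-subset bounds `r` by `e * a j`
    obtain ⟨j, hj, hjmax⟩ := U.exists_max_image a (Finset.card_pos.mp (by omega))
    have hcard : (U.erase j).card + 1 = U.card := Finset.card_erase_add_one hj
    have herase : (U.erase j).card * r ≤ e * ∑ i ∈ U.erase j, a i :=
      ih _ (Finset.erase_ssubset hj) (fun σ hσ => h σ (hσ.trans (Finset.erase_subset j U)))
        (by omega)
    obtain ⟨σ, hσU, hσ⟩ := Finset.exists_subset_card_eq hU
    have hrj : r ≤ e * a j :=
      calc r ≤ ∑ i ∈ σ, a i := h σ hσU hσ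
        _ ≤ ∑ _i ∈ σ, a j := Finset.sum_le_sum fun i hi => hjmax i (hσU hi)
        _ = e * a j := by rw [Finset.sum_const, hσ, smul_eq_mul]
    calc U.card * r = (U.erase j).card * r + r := by rw [← hcard, add_one_mul]
      _ ≤ e * ∑ i ∈ U.erase j, a i + e * a j := Nat.add_le_add herase hrj
      _ = e * ∑ i ∈ U, a i := by rw [← mul_add, Finset.sum_erase_add U a hj]

theorem le_sum_min_of_forall_le_sum [Fintype ι] {a : ι → ℕ} {d e r m : ℕ} (he : 0 < e)
    (hde : d + e ≤ Fintype.card ι + 1) (h : ∀ σ : Finset ι, σ.card = e → r ≤ ∑ i ∈ σ, a i)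
    (hrm : e * d * m ≤ r * Fintype.card ι) :
    d * m ≤ ∑ i, min (a i) m := by
  classical
  set T := Finset.univ.filter fun i => m ≤ a i
  have hsplit : ∑ i, min (a i) m = T.card * m + ∑ i ∈ Tᶜ, a i := by
    rw [← Finset.sum_add_sum_compl T, Finset.card_eq_sum_ones, Finset.sum_mul, one_mul]
    congr 1
    · exact Finset.sum_congr rfl fun i hi => min_eq_right (Finset.mem_filter.mp hi).2
    · refine Finset.sum_congr rfl fun i hi => min_eq_left (le_of_lt ?_)
      simpa [T] using Finset.mem_compl.mp hi
  obtain hdT | hTd := le_or_gt d T.card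
  · rw [hsplit]
    exact (Nat.mul_le_mul_right m hdT).trans (Nat.le_add_right _ _)
  have hTc : T.card + Tᶜ.card = Fintype.card ι := Finset.card_add_card_compl T
  have heTc : e ≤ Tᶜ.card := by omega
  have hrem : r ≤ e * m := by
    obtain ⟨σ, hσT, hσ⟩ := Finset.exists_subset_card_eq heTc
    calc r ≤ ∑ i ∈ σ, a i := h σ hσ
      _ ≤ ∑ _i ∈ σ, m := Finset.sum_le_sum fun i hi => by
          have := Finset.mem_compl.mp (hσT hi)
          simp only [T, Finset.mem_filter, Finset.mem_univ, true_and, not_le] at this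
          exact this.le
      _ = e * m := by rw [Finset.sum_const, hσ, smul_eq_mul]
  have hcompl := Tᶜ.card_mul_le_mul_sum_of_forall_le_sum a (fun σ _ hσ => h σ hσ) heTc
  refine Nat.le_of_mul_le_mul_left ?_ he
  calc e * (d * m) = e * d * m := (mul_assoc _ _ _).symm
    _ ≤ r * Fintype.card ι := hrm
    _ = T.card * r + Tᶜ.card * r := by rw [← hTc]; ring
    _ ≤ T.card * (e * m) + e * ∑ i ∈ Tᶜ, a i := Nat.add_le_add (Nat.mul_le_mul_left _ hrem) hcompl
    _ = e * ∑ i, min (a i) m := by rw [hsplit]; ring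

theorem exists_card_eq_le_sum_min_sub [Fintype ι] [DecidableEq ι] {a : ι → ℕ} {d m : ℕ}
    (h : d * (m + 1) ≤ ∑ i, min (a i) (m + 1)) :
    ∃ S : Finset ι, S.card = d ∧ (∀ i ∈ S, a i ≠ 0) ∧
      d * m ≤ ∑ i, min (a i - if i ∈ S then 1 else 0) m := by
  set P := Finset.univ.filter fun i => a i ≠ 0
  set T := Finset.univ.filter fun i => m + 1 ≤ a i
  have hTP : T ⊆ P := fun i hi => by
    simp only [T, P, Finset.mem_filter, Finset.mem_univ, true_and] at hi ⊢
    omega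
  have hdP : d ≤ P.card := by
    refine Nat.le_of_mul_le_mul_right (?_ : d * (m + 1) ≤ P.card * (m + 1)) m.succ_pos
    calc d * (m + 1) ≤ ∑ i, min (a i) (m + 1) := h
      _ ≤ ∑ i, (if a i ≠ 0 then 1 else 0) * (m + 1) :=
          Finset.sum_le_sum fun i _ => by split_ifs <;> omega
      _ = P.card * (m + 1) := by rw [← Finset.sum_mul, ← Finset.card_filter]
  have hP_ne_zero {S : Finset ι} (hSP : S ⊆ P) : ∀ i ∈ S, a i ≠ 0 := fun i hi =>
    (Finset.mem_filter.mp (hSP hi)).2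
  obtain hdT | hTd := le_or_gt d T.card
  · obtain ⟨S, hST, hS⟩ := Finset.exists_subset_card_eq hdT
    refine ⟨S, hS, hP_ne_zero (hST.trans hTP), ?_⟩
    calc d * m = ∑ _i ∈ S, m := by rw [Finset.sum_const, hS, smul_eq_mul]
      _ ≤ ∑ i ∈ S, min (a i - if i ∈ S then 1 else 0) m := Finset.sum_le_sum fun i hi => by
          have := (Finset.mem_filter.mp (hST hi)).2
          rw [if_pos hi]
          omega
      _ ≤ _ := Finset.sum_le_sum_of_subset (Finset.subset_univ S)
  obtain ⟨S, hTS, hSP, hS⟩ := Finset.exists_subsuperset_card_eq hTP hTd.le hdP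
  refine ⟨S, hS, hP_ne_zero hSP, ?_⟩
  have : d * (m + 1) ≤ ∑ i, min (a i - if i ∈ S then 1 else 0) m + d :=
    calc d * (m + 1) ≤ ∑ i, min (a i) (m + 1) := h
      _ ≤ ∑ i, (min (a i - if i ∈ S then 1 else 0) m + if i ∈ S then 1 else 0) :=
          Finset.sum_le_sum fun i _ => by
            by_cases hi : i ∈ S
            · have := hP_ne_zero hSP i hi
              simp only [if_pos hi]
              omega
            · have : ¬ m + 1 ≤ a i := fun hle =>
                hi (hTS (Finset.mem_filter.mpr ⟨Finset.mem_univ i, hle⟩))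
              simp only [if_neg hi]
              omega
      _ = ∑ i, min (a i - if i ∈ S then 1 else 0) m + d := by
          rw [Finset.sum_add_distrib, ← Finset.card_filter, Finset.filter_mem_eq_inter,
            Finset.univ_inter, hS]
  rw [Nat.mul_succ] at this
  omega

variable (k : Type*) [CommSemiring k]

noncomputable def squarefreeMonomialIdeal (ι : Type*) (d : ℕ) : Ideal (MvPolynomial ι k) :=
  Ideal.span {p | ∃ s : Finset ι, s.card = d ∧ p = ∏ j ∈ s, X j}

variable {k}

theorem prod_X_eq_monomial (s : Finset ι) :
    (∏ j ∈ s, X j : MvPolynomial ι k) = monomial (∑ j ∈ s, Finsupp.single j 1) 1 := by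
  rw [monomial_sum_one]
  rfl

theorem monomial_mem_squarefreeMonomialIdeal_pow [Fintype ι] {d m : ℕ} {a : ι →₀ ℕ} (c : k)
    (h : d * m ≤ ∑ i, min (a i) m) :
    monomial a c ∈ squarefreeMonomialIdeal k ι d ^ m := by
  classical
  induction m generalizing a with
  | zero => simp
  | succ m ih =>
    obtain ⟨S, hS, hSa, hm⟩ := exists_card_eq_le_sum_min_sub h
    set χ : ι →₀ ℕ := ∑ j ∈ S, Finsupp.single j 1
    have hχ (i : ι) : χ i = if i ∈ S then 1 else 0 := by
      simp [χ, Finset.sum_apply', Finsupp.single_apply]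
    have hχa : χ ≤ a := fun i => by
      rw [hχ]
      split_ifs with hi
      · exact Nat.one_le_iff_ne_zero.mpr (hSa i hi)
      · exact Nat.zero_le _
    have hsplit : monomial a c = (∏ j ∈ S, X j) * monomial (a - χ) c := by
      rw [prod_X_eq_monomial, monomial_mul, one_mul, add_tsub_cancel_of_le hχa]
    rw [hsplit, pow_succ']
    refine Ideal.mul_mem_mul (Ideal.subset_span ⟨S, hS, rfl⟩) (ih ?_)
    simpa only [Finsupp.tsub_apply, hχ] using hm

theorem le_sum_of_mem_span_X_pow {s : Finset ι} {r : ℕ} {p : MvPolynomial ι k}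
    (hp : p ∈ Ideal.span (X '' (s : Set ι)) ^ r) {v : ι →₀ ℕ} (hv : v ∈ p.support) :
    r ≤ ∑ i ∈ s, v i := by
  classical
  suffices Ideal.span (X '' (s : Set ι)) ^ r ≤
      Ideal.span ((monomial · (1 : k)) '' {v : ι →₀ ℕ | r ≤ ∑ i ∈ s, v i}) by
    obtain ⟨w, hw, hwv⟩ := mem_ideal_span_monomial_image.mp (this hp) v hv
    exact hw.trans (Finset.sum_le_sum fun i _ => hwv i)
  clear hp hv
  induction r with
  | zero =>
    rw [pow_zero, Ideal.one_eq_top, top_le_iff, Ideal.eq_top_iff_one]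
    exact Ideal.subset_span ⟨0, Nat.zero_le _, by simp⟩
  | succ r ih =>
    rw [pow_succ]
    refine (Ideal.mul_mono_left ih).trans ?_
    rw [Ideal.span_mul_span, Ideal.span_le]
    rintro _ ⟨_, ⟨w, hw, rfl⟩, _, ⟨i, hi, rfl⟩, rfl⟩
    refine Ideal.subset_span
      ⟨w + Finsupp.single i 1, ?_, by dsimp only; rw [monomial_add_single, pow_one]⟩
    simpa [Finset.sum_add_distrib, Finsupp.single_apply, Finset.mem_coe.mp hi] using hw

end

theorem stmt_13_general (k : Type*) [Field k] (n e : ℕ) (he1 : 1 ≤ e) (he2 : e ≤ n - 1)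
    (d : ℕ) (hd : d = n - e + 1)
    (I : Ideal (MvPolynomial (Fin n) k))
    (hI : I = Ideal.span {p | ∃ s : Finset (Fin n), s.card = d ∧ p = ∏ j ∈ s, X j})
    (r m : ℕ) (hrm : e * d * m ≤ r * n) :
    (⨅ σ ∈ {s : Finset (Fin n) | s.card = e},
        (Ideal.span (X '' (σ : Set (Fin n))) : Ideal (MvPolynomial (Fin n) k)) ^ r)
      ≤ I ^ m := by
  intro p hp
  simp only [Ideal.mem_iInf, Set.mem_ofPred_eq] at hp
  rw [hI, p.as_sum]
  refine Ideal.sum_mem _ fun v hv => monomial_mem_squarefreeMonomialIdeal_pow _ ?_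
  refine le_sum_min_of_forall_le_sum (e := e) (r := r) he1 ?_ ?_ ?_
  · rw [Fintype.card_fin]
    omega
  · exact fun σ hσ => le_sum_of_mem_span_X_pow (hp σ hσ) hv
  · rwa [Fintype.card_fin]

/-- if `r·n ≥ e·d·m` then `⋂_σ I_σ^r ⊆ I^m`, where `I` is generated by
the squarefree monomials of degree `d = n-e+1` and `σ` ranges over `e`-subsets. -/
theorem stmt_13 (k : Type*) [Field k] (n e : ℕ) (hn : 2 ≤ n) (he1 : 1 ≤ e) (he2 : e ≤ n - 1)
    (d : ℕ) (hd : d = n - e + 1)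
    (I : Ideal (MvPolynomial (Fin n) k))
    (hI : I = Ideal.span {p | ∃ s : Finset (Fin n), s.card = d ∧ p = ∏ j ∈ s, X j})
    (r m : ℕ) (hrm : e * d * m ≤ r * n) :
    (⨅ σ ∈ {s : Finset (Fin n) | s.card = e},
        (Ideal.span (X '' (σ : Set (Fin n))) : Ideal (MvPolynomial (Fin n) k)) ^ r)
      ≤ I ^ m :=
  stmt_13_general k n e he1 he2 d hd I hI r m hrm
end
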